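/- arXiv:1812.10344 — 7 statements merged into one kernel-verified Lean document; each statement's English description precedes it below -/
import Mathlib

section
/- Let N ~ N(μ, σ²). For every g : ℝ → ℝ with E|g(N)| < ∞ and every locally absolutely continuous h : ℝ → ℝ with E[|h'(N)| · |L_γ g(N)|] < ∞ and such that L_γ g(x) · h(x) · γ(x) → 0 as x → ±∞, one has Cov[g(N), h(N)] = E[(−L_γ g(N)) h'(N)]. -/
/-!
With `γ` the Gaussian density and `ψ = γ (g - E g)`, the function `φ = (L_γ g) γ` is the
primitive `x ↦ ∫_{-∞}^x ψ`. Both `φ` and `h` are absolutely continuous, so integration by parts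
on `[a, b]` gives `∫_a^b (ψ h + φ h') = φ h |_a^b`, and the boundary term vanishes as
`a → -∞`, `b → ∞`. Hence `∫ φ h' = -∫ ψ h`, and these two integrals are
`-E[(-L_γ g)(N) h'(N)]` and `Cov[g(N), h(N)]`.
-/

open MeasureTheory ProbabilityTheory Set Filter
open scoped NNReal

/-- The Gaussian inverse Stein operator
`L_γ g (x) = (1/γ(x)) ∫_{−∞}^x (g(u) − E[g(N)]) γ(u) du`. -/
noncomputable def gaussL (m : ℝ) (v : ℝ≥0) (g : ℝ → ℝ) (x : ℝ) : ℝ :=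
  (∫ u in Iic x, (g u - ∫ y, g y ∂(gaussianReal m v)) ∂(gaussianReal m v)) /
    gaussianPDFReal m v x

/-- `h` is locally absolutely continuous with a.e. derivative `h'`,
expressed through the fundamental theorem of calculus. -/
def HasAEDeriv (h h' : ℝ → ℝ) : Prop :=
  ∀ x y : ℝ, IntervalIntegrable h' MeasureTheory.volume x y ∧
    h y - h x = ∫ t in x..y, h' t

open Topology

theorem MeasureTheory.integral_eq_sub_of_intervalIntegral_eq_sub {E : Type*}
    [NormedAddCommGroup E] [NormedSpace ℝ E] {f u : ℝ → E} {c d : E} (hf : Integrable f)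
    (hu : ∀ a b, ∫ x in a..b, f x = u b - u a)
    (hbot : Tendsto u atBot (𝓝 c)) (htop : Tendsto u atTop (𝓝 d)) :
    ∫ x, f x = d - c :=
  tendsto_nhds_unique
    ((intervalIntegral_tendsto_integral hf tendsto_fst tendsto_snd).congr
      fun p : ℝ × ℝ => hu p.1 p.2)
    ((htop.comp tendsto_snd).sub (hbot.comp (tendsto_fst (g := atTop))))

namespace HasAEDeriv

variable {F f G g : ℝ → ℝ}

theorem eq_add_intervalIntegral (hF : HasAEDeriv F f) (a x : ℝ) :
    F x = F a + ∫ t in a..x, f t := by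
  linarith [(hF a x).2]

theorem locallyIntegrable (hF : HasAEDeriv F f) : LocallyIntegrable f :=
  locallyIntegrable_iff.2 fun K hK =>
    ((intervalIntegrable_iff' (by simp)).1 (hF (sInf K) (sSup K)).1).mono_set
      (hK.isBounded.subset_Icc_sInf_sSup.trans Icc_subset_uIcc)

theorem continuous (hF : HasAEDeriv F f) : Continuous F := by
  rw [funext (hF.eq_add_intervalIntegral 0)]
  exact continuous_const.add (intervalIntegral.continuous_primitive (fun x y => (hF x y).1) 0)

theorem absolutelyContinuousOnInterval (hF : HasAEDeriv F f) (a b : ℝ) :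
    AbsolutelyContinuousOnInterval F a b := by
  rw [funext (hF.eq_add_intervalIntegral a)]
  exact (LipschitzWith.const (F a)).lipschitzOnWith.absolutelyContinuousOnInterval.add
    ((hF a b).1.absolutelyContinuousOnInterval_intervalIntegral left_mem_uIcc)

theorem ae_hasDerivAt (hF : HasAEDeriv F f) : ∀ᵐ x, HasDerivAt F (f x) x := by
  filter_upwards [LocallyIntegrable.ae_hasDerivAt_integral hF.locallyIntegrable] with x hx
  rw [funext (hF.eq_add_intervalIntegral 0)]
  exact (hx 0).const_add _

theorem intervalIntegral_deriv_mul_eq_sub (hF : HasAEDeriv F f) (hG : HasAEDeriv G g) (a b : ℝ) :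
    ∫ x in a..b, f x * G x + F x * g x = F b * G b - F a * G a := by
  rw [← (hF.absolutelyContinuousOnInterval a b).integral_deriv_mul_eq_sub
    (hG.absolutelyContinuousOnInterval a b)]
  refine intervalIntegral.integral_congr_ae ?_
  filter_upwards [hF.ae_hasDerivAt, hG.ae_hasDerivAt] with x hFx hGx _
  rw [hFx.deriv, hGx.deriv]

theorem integral_mul_deriv_eq_neg (hF : HasAEDeriv F f) (hG : HasAEDeriv G g)
    (hfG : Integrable fun x => f x * G x) (hFg : Integrable fun x => F x * g x)
    (hbot : Tendsto (fun x => F x * G x) atBot (𝓝 0))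
    (htop : Tendsto (fun x => F x * G x) atTop (𝓝 0)) :
    ∫ x, F x * g x = -∫ x, f x * G x := by
  have hsum := integral_eq_sub_of_intervalIntegral_eq_sub
    (f := fun x => f x * G x + F x * g x) (hfG.add hFg)
    (hF.intervalIntegral_deriv_mul_eq_sub hG) hbot htop
  rw [integral_add hfG hFg, sub_zero] at hsum
  linarith

end HasAEDeriv

theorem MeasureTheory.Integrable.hasAEDeriv_integral_Iic {ψ : ℝ → ℝ} (hψ : Integrable ψ) :
    HasAEDeriv (fun x => ∫ t in Iic x, ψ t) ψ := fun _ _ =>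
  ⟨hψ.intervalIntegrable, intervalIntegral.integral_Iic_sub_Iic hψ.integrableOn hψ.integrableOn⟩

namespace ProbabilityTheory

variable {m : ℝ} {v : ℝ≥0}

theorem integrable_gaussianReal_iff (hv : v ≠ 0) {f : ℝ → ℝ} :
    Integrable f (gaussianReal m v) ↔ Integrable fun x => gaussianPDFReal m v x * f x := by
  rw [gaussianReal_of_var_ne_zero m hv, integrable_withDensity_iff_integrable_smul'
    (measurable_gaussianPDF m v) (ae_of_all _ fun _ => gaussianPDF_lt_top)]
  simp only [toReal_gaussianPDF, smul_eq_mul]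

theorem setIntegral_gaussianReal_eq (hv : v ≠ 0) {f : ℝ → ℝ} {s : Set ℝ} (hs : MeasurableSet s) :
    ∫ x in s, f x ∂gaussianReal m v = ∫ x in s, gaussianPDFReal m v x * f x := by
  rw [gaussianReal_of_var_ne_zero m hv, restrict_withDensity hs,
    integral_withDensity_eq_integral_toReal_smul (measurable_gaussianPDF m v)
      (ae_of_all _ fun _ => gaussianPDF_lt_top)]
  simp only [toReal_gaussianPDF, smul_eq_mul]

theorem gaussL_mul_gaussianPDFReal (hv : v ≠ 0) (g : ℝ → ℝ) (x : ℝ) :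
    gaussL m v g x * gaussianPDFReal m v x =
      ∫ u in Iic x, gaussianPDFReal m v u * (g u - ∫ y, g y ∂gaussianReal m v) := by
  rw [gaussL, div_mul_cancel₀ _ (gaussianPDFReal_pos m v x hv).ne',
    setIntegral_gaussianReal_eq hv measurableSet_Iic]

end ProbabilityTheory

theorem gaussian_stein_covariance_identity_general (m σ : ℝ) (hσ : 0 < σ)
    (g h h' : ℝ → ℝ)
    (hgint : Integrable g (gaussianReal m ((σ ^ 2).toNNReal)))
    (hhint : Integrable h (gaussianReal m ((σ ^ 2).toNNReal)))
    (hghint : Integrable (fun x => g x * h x) (gaussianReal m ((σ ^ 2).toNNReal)))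
    (hAC : HasAEDeriv h h')
    (hmix : Integrable (fun x => |h' x| * |gaussL m ((σ ^ 2).toNNReal) g x|)
      (gaussianReal m ((σ ^ 2).toNNReal)))
    (hlimtop : Tendsto
      (fun x => gaussL m ((σ ^ 2).toNNReal) g x * h x * gaussianPDFReal m ((σ ^ 2).toNNReal) x)
      atTop (nhds 0))
    (hlimbot : Tendsto
      (fun x => gaussL m ((σ ^ 2).toNNReal) g x * h x * gaussianPDFReal m ((σ ^ 2).toNNReal) x)
      atBot (nhds 0)) :
    (∫ x, g x * h x ∂(gaussianReal m ((σ ^ 2).toNNReal))) -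
        (∫ x, g x ∂(gaussianReal m ((σ ^ 2).toNNReal))) *
          (∫ x, h x ∂(gaussianReal m ((σ ^ 2).toNNReal))) =
      ∫ x, (-(gaussL m ((σ ^ 2).toNNReal) g x)) * h' x
        ∂(gaussianReal m ((σ ^ 2).toNNReal)) := by
  set v := (σ ^ 2).toNNReal
  have hv : v ≠ 0 := (Real.toNNReal_pos.2 (pow_pos hσ 2)).ne'
  set γ := gaussianPDFReal m v
  set gmean := ∫ y, g y ∂gaussianReal m v
  set ψ := fun x => γ x * (g x - gmean)
  set φ := fun x => ∫ t in Iic x, ψ t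
  have hψ : Integrable ψ := (integrable_gaussianReal_iff hv).1 (hgint.sub (integrable_const gmean))
  have hφ : ∀ x, gaussL m v g x * γ x = φ x := gaussL_mul_gaussianPDFReal hv g
  have hψh : Integrable fun x => ψ x * h x := by
    exact ((integrable_gaussianReal_iff hv).1 (hghint.sub (hhint.const_mul gmean))).congr
      (ae_of_all _ fun x => by simp only [ψ, Pi.sub_apply]; ring)
  have hφh' : Integrable fun x => φ x * h' x := by
    refine ((integrable_gaussianReal_iff hv).1 hmix).mono'
      (hψ.hasAEDeriv_integral_Iic.continuous.aestronglyMeasurable.mul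
        hAC.locallyIntegrable.aestronglyMeasurable) (ae_of_all _ fun x => ?_)
    rw [← hφ, Real.norm_eq_abs, abs_mul, abs_mul, abs_of_pos (gaussianPDFReal_pos m v x hv)]
    linarith
  have hcov : ∫ x, g x * h x ∂gaussianReal m v - gmean * ∫ x, h x ∂gaussianReal m v =
      ∫ x, ψ x * h x := by
    rw [← integral_const_mul, ← integral_sub hghint (hhint.const_mul gmean),
      integral_gaussianReal_eq_integral_smul hv]
    exact integral_congr_ae (ae_of_all _ fun x => by simp only [ψ, smul_eq_mul]; ring)
  have hrhs : ∫ x, -gaussL m v g x * h' x ∂gaussianReal m v = -∫ x, φ x * h' x := by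
    rw [integral_gaussianReal_eq_integral_smul hv, ← integral_neg]
    exact integral_congr_ae (ae_of_all _ fun x => by simp only [← hφ, smul_eq_mul]; ring)
  have hlim : ∀ x, gaussL m v g x * h x * γ x = φ x * h x := fun x => by
    rw [← hφ]; ring
  rw [hcov, hrhs, hψ.hasAEDeriv_integral_Iic.integral_mul_deriv_eq_neg hAC hψh hφh'
    (hlimbot.congr hlim) (hlimtop.congr hlim), neg_neg]

/-- The Gaussian Stein covariance identity:
`Cov[g(N), h(N)] = E[(−L_γ g(N)) h'(N)]` for `N ~ N(m, σ²)`. -/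
theorem gaussian_stein_covariance_identity (m σ : ℝ) (hσ : 0 < σ)
    (g h h' : ℝ → ℝ)
    (hgmeas : Measurable g) (hhmeas : Measurable h) (hh'meas : Measurable h')
    (hgint : Integrable g (gaussianReal m ((σ ^ 2).toNNReal)))
    (hhint : Integrable h (gaussianReal m ((σ ^ 2).toNNReal)))
    (hghint : Integrable (fun x => g x * h x) (gaussianReal m ((σ ^ 2).toNNReal)))
    (hAC : HasAEDeriv h h')
    (hmix : Integrable (fun x => |h' x| * |gaussL m ((σ ^ 2).toNNReal) g x|)
      (gaussianReal m ((σ ^ 2).toNNReal)))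
    (hlimtop : Tendsto
      (fun x => gaussL m ((σ ^ 2).toNNReal) g x * h x * gaussianPDFReal m ((σ ^ 2).toNNReal) x)
      atTop (nhds 0))
    (hlimbot : Tendsto
      (fun x => gaussL m ((σ ^ 2).toNNReal) g x * h x * gaussianPDFReal m ((σ ^ 2).toNNReal) x)
      atBot (nhds 0)) :
    (∫ x, g x * h x ∂(gaussianReal m ((σ ^ 2).toNNReal))) -
        (∫ x, g x ∂(gaussianReal m ((σ ^ 2).toNNReal))) *
          (∫ x, h x ∂(gaussianReal m ((σ ^ 2).toNNReal))) =
      ∫ x, (-(gaussL m ((σ ^ 2).toNNReal) g x)) * h' x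
        ∂(gaussianReal m ((σ ^ 2).toNNReal)) :=
  gaussian_stein_covariance_identity_general m σ hσ g h h' hgint hhint hghint hAC hmix hlimtop
    hlimbot
end

section
/- (Representation formula I, continuous case.) Let p be a probability density on ℝ (with respect to Lebesgue measure) whose set of positivity is an open interval S = (a, b) (a, b ∈ ℝ ∪ {−∞, +∞}), and let X have density p. Let η : ℝ → ℝ satisfy E|η(X)| < ∞ and E[η(X)] = 0, and define f(x) = (1/p(x)) ∫_a^x η(u) p(u) du for x ∈ S. Then: (i) the function x ↦ f(x) p(x) is locally absolutely continuous on S with derivative (f p)'(x) = η(x) p(x) for a.e. x ∈ S, so that the canonical Stein operator satisfies T_p f(x) := (f p)'(x)/p(x) = η(x) for a.e. x ∈ S; (ii) f(x) p(x) → 0 as x → a⁺ and as x → b⁻, and E[T_p f(X)] = 0. -/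
/-!
Off `S = (a, b)` the density vanishes, so the primitive `F x = ∫_{(-∞, x)} η p` is `0` left
of `S` and equals `E[η(X)] = 0` right of `S`. Hence `f p = F` on all of `ℝ`, not only on `S`,
and every claim is a statement about the primitive of an integrable function: differences are
interval integrals, the Lebesgue differentiation theorem gives `F' = η p` a.e., and dominated
convergence gives the limits at the endpoints.
-/

open MeasureTheory Set Filter Topology

section IntegralIio

variable {E : Type*} [NormedAddCommGroup E] [NormedSpace ℝ E] {g : ℝ → E}

theorem integral_Iio_sub_integral_Iio [CompleteSpace E] {μ : Measure ℝ} [NullSingletonClass μ]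
    (hg : Integrable g μ) (u v : ℝ) :
    ∫ t in Iio v, g t ∂μ - ∫ t in Iio u, g t ∂μ = ∫ t in u..v, g t ∂μ := by
  simp_rw [← integral_Iic_eq_integral_Iio]
  exact intervalIntegral.integral_Iic_sub_Iic hg.integrableOn hg.integrableOn

theorem MeasureTheory.Integrable.ae_hasDerivAt_integral_Iio [CompleteSpace E]
    (hg : Integrable g) : ∀ᵐ x, HasDerivAt (fun y => ∫ t in Iio y, g t) (g x) x := by
  filter_upwards [LocallyIntegrable.ae_hasDerivAt_integral hg.locallyIntegrable] with x hx
  have hF : (fun y => ∫ t in Iio y, g t) =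
      fun y => (∫ t in Iio 0, g t) + ∫ t in 0..y, g t := by
    funext y
    rw [← integral_Iio_sub_integral_Iio hg 0 y, add_sub_cancel]
  rw [hF]
  exact (hx 0).const_add (∫ t in Iio 0, g t)

theorem tendsto_integral_Iio_of_tendsto_indicator (hg : Integrable g) {l : Filter ℝ}
    [l.IsCountablyGenerated] {G : ℝ → E}
    (hG : ∀ᵐ t, Tendsto (fun x => (Iio x).indicator g t) l (𝓝 (G t))) :
    Tendsto (fun x => ∫ t in Iio x, g t) l (𝓝 (∫ t, G t)) := by
  simp_rw [← integral_indicator measurableSet_Iio]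
  exact tendsto_integral_filter_of_dominated_convergence (fun t => ‖g t‖)
    (Eventually.of_forall fun _ => hg.aestronglyMeasurable.indicator measurableSet_Iio)
    (Eventually.of_forall fun _ => Eventually.of_forall fun t => norm_indicator_le_norm_self g t)
    hg.norm hG

theorem tendsto_integral_Iio_comap_nhdsGT {a : EReal} (hg : Integrable g)
    (hga : ∀ t : ℝ, (t : EReal) ≤ a → g t = 0) :
    Tendsto (fun x => ∫ t in Iio x, g t) (comap (↑) (𝓝[>] a)) (𝓝 0) := by
  simpa using tendsto_integral_Iio_of_tendsto_indicator hg (G := 0) <| ae_of_all _ fun t => by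
    rcases le_or_gt (t : EReal) a with hta | hta
    · simp [indicator_apply, hga t hta, tendsto_const_nhds]
    · refine tendsto_const_nhds.congr' ?_
      filter_upwards [preimage_mem_comap (nhdsWithin_le_nhds (Iio_mem_nhds hta))] with x hx
      have hxt : x < t := EReal.coe_lt_coe_iff.mp hx
      simp [not_lt.mpr hxt.le]

theorem tendsto_integral_Iio_comap_nhdsLT {b : EReal} (hg : Integrable g)
    (hgb : ∀ t : ℝ, b ≤ (t : EReal) → g t = 0) :
    Tendsto (fun x => ∫ t in Iio x, g t) (comap (↑) (𝓝[<] b)) (𝓝 (∫ t, g t)) := by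
  refine tendsto_integral_Iio_of_tendsto_indicator hg <| ae_of_all _ fun t => ?_
  rcases le_or_gt b (t : EReal) with htb | htb
  · simp [indicator_apply, hgb t htb, tendsto_const_nhds]
  · refine tendsto_const_nhds.congr' ?_
    filter_upwards [preimage_mem_comap (nhdsWithin_le_nhds (Ioi_mem_nhds htb))] with x hx
    have htx : t < x := EReal.coe_lt_coe_iff.mp hx
    simp [htx]

theorem integral_Iio_eq_zero_of_notMem_Ioo {a b : EReal} (hg : ∫ t, g t = 0)
    (hgS : ∀ t : ℝ, (t : EReal) ∉ Ioo a b → g t = 0) {x : ℝ}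
    (hx : (x : EReal) ∉ Ioo a b) : ∫ t in Iio x, g t = 0 := by
  rcases not_and_or.mp hx with hxa | hxb
  · refine setIntegral_eq_zero_of_forall_eq_zero fun t ht => hgS t fun htS => hxa ?_
    exact htS.1.trans (EReal.coe_lt_coe_iff.mpr ht)
  · rw [setIntegral_eq_integral_of_forall_compl_eq_zero
      fun t ht => hgS t fun htS => hxb ?_, hg]
    exact (EReal.coe_le_coe_iff.mpr (not_lt.mp ht)).trans_lt htS.2

end IntegralIio

theorem representation_formula_I_continuous_general
    (p η : ℝ → ℝ) (a b : EReal)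
    (hp0 : ∀ x, 0 ≤ p x)
    (hppos : ∀ x : ℝ, 0 < p x ↔ a < (x : EReal) ∧ (x : EReal) < b)
    (hηint : Integrable (fun x => η x * p x))
    (hηmean : ∫ x, η x * p x = 0)
    (f : ℝ → ℝ)
    (hf : ∀ x, f x = (∫ u in Iio x, η u * p u) / p x) :
    (∀ x : ℝ, a < (x : EReal) ∧ (x : EReal) < b →
      ∀ y : ℝ, a < (y : EReal) ∧ (y : EReal) < b →
        f y * p y - f x * p x = ∫ t in x..y, η t * p t) ∧
    (∀ᵐ x ∂(volume.restrict {x : ℝ | a < (x : EReal) ∧ (x : EReal) < b}),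
      HasDerivAt (fun y => f y * p y) (η x * p x) x) ∧
    Tendsto (fun x : ℝ => f x * p x)
      (Filter.comap (fun x : ℝ => (x : EReal)) (nhdsWithin a (Ioi a))) (nhds 0) ∧
    Tendsto (fun x : ℝ => f x * p x)
      (Filter.comap (fun x : ℝ => (x : EReal)) (nhdsWithin b (Iio b))) (nhds 0) ∧
    ∫ x in {x : ℝ | a < (x : EReal) ∧ (x : EReal) < b}, η x * p x = 0 := by
  have hgS : ∀ t : ℝ, (t : EReal) ∉ Ioo a b → η t * p t = 0 := fun t ht => by
    rw [((hp0 t).eq_or_lt.resolve_right (mt (hppos t).1 ht)).symm, mul_zero]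
  have hfp : ∀ x, f x * p x = ∫ t in Iio x, η t * p t := fun x => by
    rcases eq_or_ne (p x) 0 with hpx | hpx
    · rw [hpx, mul_zero, integral_Iio_eq_zero_of_notMem_Ioo hηmean hgS
        fun hx => ((hppos x).2 hx).ne' hpx]
    · rw [hf, div_mul_cancel₀ _ hpx]
  simp_rw [hfp]
  refine ⟨fun x _ y _ => integral_Iio_sub_integral_Iio hηint x y,
    ae_restrict_of_ae hηint.ae_hasDerivAt_integral_Iio,
    tendsto_integral_Iio_comap_nhdsGT hηint fun t ht => hgS t fun htS => ht.not_gt htS.1,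
    hηmean ▸ tendsto_integral_Iio_comap_nhdsLT hηint
      fun t ht => hgS t fun htS => ht.not_gt htS.2,
    ?_⟩
  rw [setIntegral_eq_integral_of_forall_compl_eq_zero
    (s := {x : ℝ | a < (x : EReal) ∧ (x : EReal) < b}) hgS, hηmean]

/-- Representation formula I, continuous case: if `p` is a probability density that is
positive exactly on the open interval `S = (a,b)` and `η` is a `p`-mean-zero integrable
function, then `f(x) = (1/p(x)) ∫_a^x η(u)p(u)du` satisfies:
(i) `f·p` is locally absolutely continuous on `S` with derivative `η·p` a.e.
(so `T_p f = η` a.e. on `S`); (ii) `f·p → 0` at both endpoints of `S`, and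
`E[T_p f(X)] = 0`. -/
theorem representation_formula_I_continuous
    (p η : ℝ → ℝ) (a b : EReal) (hab : a < b)
    (hpmeas : Measurable p) (hp0 : ∀ x, 0 ≤ p x)
    (hppos : ∀ x : ℝ, 0 < p x ↔ a < (x : EReal) ∧ (x : EReal) < b)
    (hp1 : ∫ x, p x = 1)
    (hηmeas : Measurable η)
    (hηint : Integrable (fun x => η x * p x))
    (hηmean : ∫ x, η x * p x = 0)
    (f : ℝ → ℝ)
    (hf : ∀ x, f x = (∫ u in Iio x, η u * p u) / p x) :
    (∀ x : ℝ, a < (x : EReal) ∧ (x : EReal) < b →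
      ∀ y : ℝ, a < (y : EReal) ∧ (y : EReal) < b →
        f y * p y - f x * p x = ∫ t in x..y, η t * p t) ∧
    (∀ᵐ x ∂(volume.restrict {x : ℝ | a < (x : EReal) ∧ (x : EReal) < b}),
      HasDerivAt (fun y => f y * p y) (η x * p x) x) ∧
    Tendsto (fun x : ℝ => f x * p x)
      (Filter.comap (fun x : ℝ => (x : EReal)) (nhdsWithin a (Ioi a))) (nhds 0) ∧
    Tendsto (fun x : ℝ => f x * p x)
      (Filter.comap (fun x : ℝ => (x : EReal)) (nhdsWithin b (Iio b))) (nhds 0) ∧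
    ∫ x in {x : ℝ | a < (x : EReal) ∧ (x : EReal) < b}, η x * p x = 0 :=
  representation_formula_I_continuous_general p η a b hp0 hppos hηint hηmean f hf
end

section
/- (Stein integration-by-parts formulas, continuous case.) Let p be a probability density on ℝ positive exactly on the open interval S = (a, b), and let X have density p. (i) Let c : S → ℝ be such that cp is locally absolutely continuous on S, and let g : S → ℝ be locally absolutely continuous with c(x) g(x) p(x) → 0 as x → a⁺ and as x → b⁻, with E[|c(X) g'(X)|] < ∞ and E[|(cp)'(X)/p(X) · g(X)|] < ∞. Then E[c(X) g'(X)] = −E[((cp)'(X)/p(X)) g(X)]. (ii) Let η satisfy E|η(X)| < ∞ and E[η(X)] = 0, and let g be locally absolutely continuous with L_p η(x) g(x) p(x) → 0 at both endpoints of S and E[|L_p η(X) g'(X)|] < ∞, E[|η(X) g(X)|] < ∞. Then E[(−L_p η(X)) g'(X)] = E[η(X) g(X)]. -/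
open MeasureTheory Set Filter

/-- `h` is locally absolutely continuous on `S` with a.e. derivative `h'`,
expressed through the fundamental theorem of calculus. -/
def LocAC (S : Set ℝ) (h h' : ℝ → ℝ) : Prop :=
  ∀ x ∈ S, ∀ y ∈ S, IntervalIntegrable h' MeasureTheory.volume x y ∧
    h y - h x = ∫ t in x..y, h' t

/-- Integration by parts for two functions given by FTC representations on `[x,y]`. -/
lemma ibp_aux (x y : ℝ) (hxy : x ≤ y) (H G h' g' : ℝ → ℝ)
    (hh' : IntegrableOn h' (Ioc x y)) (hg' : IntegrableOn g' (Ioc x y))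
    (hH : ∀ u ∈ Icc x y, H u = H x + ∫ t in Ioc x u, h' t)
    (hG : ∀ u ∈ Icc x y, G u = G x + ∫ t in Ioc x u, g' t) :
    ∫ s in Ioc x y, (h' s * G s + H s * g' s) = H y * G y - H x * G x := by
  set ν := volume.restrict (Ioc x y) with hν
  set P : ℝ → ℝ := fun s => ∫ t in Ioc x s, g' t with hP
  set Q : ℝ → ℝ := fun s => ∫ t in Ioc x s, h' t with hQ
  have hIccg : IntegrableOn g' (Icc x y) := by
    rwa [IntegrableOn, ← Measure.restrict_congr_set Ioc_ae_eq_Icc]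
  have hIcch : IntegrableOn h' (Icc x y) := by
    rwa [IntegrableOn, ← Measure.restrict_congr_set Ioc_ae_eq_Icc]
  have hPcont : ContinuousOn P (Icc x y) := intervalIntegral.continuousOn_primitive hIccg
  have hQcont : ContinuousOn Q (Icc x y) := intervalIntegral.continuousOn_primitive hIcch
  have hPm : AEStronglyMeasurable P ν :=
    (hPcont.mono Ioc_subset_Icc_self).aestronglyMeasurable measurableSet_Ioc
  have hQm : AEStronglyMeasurable Q ν :=
    (hQcont.mono Ioc_subset_Icc_self).aestronglyMeasurable measurableSet_Ioc
  have hbd : ∀ (f' F : ℝ → ℝ), IntegrableOn f' (Ioc x y) →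
      (F = fun s => ∫ t in Ioc x s, f' t) → ∀ᵐ s ∂ν, ‖F s‖ ≤ ∫ t in Ioc x y, ‖f' t‖ := by
    intro f' F hf' hF
    rw [hν, ae_restrict_iff' measurableSet_Ioc]
    refine ae_of_all _ fun s hs => ?_
    rw [hF]
    calc ‖∫ t in Ioc x s, f' t‖ ≤ ∫ t in Ioc x s, ‖f' t‖ := norm_integral_le_integral_norm _
      _ ≤ ∫ t in Ioc x y, ‖f' t‖ := by
          apply setIntegral_mono_set hf'.norm (ae_of_all _ fun t => norm_nonneg _)
          exact HasSubset.Subset.eventuallyLE (Ioc_subset_Ioc_right hs.2)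
  -- integrability of the four pieces
  have hi1 : Integrable (fun s => h' s * G x) ν := hh'.mul_const _
  have hi2 : Integrable (fun s => H x * g' s) ν := hg'.const_mul _
  have hi3 : Integrable (fun s => P s * h' s) ν := hh'.bdd_mul hPm (hbd g' P hg' hP)
  have hi4 : Integrable (fun s => Q s * g' s) ν := hg'.bdd_mul hQm (hbd h' Q hh' hQ)
  -- the Fubini identity
  set D1 : Set (ℝ × ℝ) := {q | q.2 ≤ q.1} with hD1
  set D2 : Set (ℝ × ℝ) := {q | q.1 ≤ q.2} with hD2
  have hD1m : MeasurableSet D1 := measurableSet_le measurable_snd measurable_fst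
  have hD2m : MeasurableSet D2 := measurableSet_le measurable_fst measurable_snd
  have main : ∀ f₁ f₂ : ℝ → ℝ, IntegrableOn f₁ (Ioc x y) → IntegrableOn f₂ (Ioc x y) →
      ∫ s, (∫ t in Ioc x s, f₂ t) * f₁ s ∂ν
        = ∫ q, D1.indicator (fun q : ℝ × ℝ => f₁ q.1 * f₂ q.2) q ∂(ν.prod ν) := by
    intro f₁ f₂ hf₁ hf₂
    have hFint : Integrable (fun q : ℝ × ℝ => f₁ q.1 * f₂ q.2) (ν.prod ν) := hf₁.mul_prod hf₂
    have hii := MeasureTheory.integral_integral (f := fun s t =>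
      D1.indicator (fun q : ℝ × ℝ => f₁ q.1 * f₂ q.2) (s, t)) (hFint.indicator hD1m)
    rw [← hii]
    apply integral_congr_ae
    filter_upwards [ae_restrict_mem measurableSet_Ioc] with s hs
    show (∫ t in Ioc x s, f₂ t) * f₁ s
        = ∫ t, D1.indicator (fun q : ℝ × ℝ => f₁ q.1 * f₂ q.2) (s, t) ∂ν
    have h1 : (fun t => D1.indicator (fun q : ℝ × ℝ => f₁ q.1 * f₂ q.2) (s, t))
        = (Iic s).indicator (fun t => f₁ s * f₂ t) := by
      ext t; by_cases h : t ≤ s <;> simp [Set.indicator_apply, hD1, h]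
    have h2 : Iic s ∩ Ioc x y = Ioc x s := by
      ext t
      constructor
      · rintro ⟨h1', h2', _⟩; exact ⟨h2', h1'⟩
      · rintro ⟨h1', h2'⟩; exact ⟨h2', h1', h2'.trans hs.2⟩
    rw [h1, integral_indicator measurableSet_Iic, hν,
      Measure.restrict_restrict measurableSet_Iic, h2, integral_const_mul]
    ring
  have hI3 := main h' g' hh' hg'
  have hI4 := main g' h' hg' hh'
  -- convert hI4's right side by swapping coordinates
  have hswap : ∫ q, D1.indicator (fun q : ℝ × ℝ => g' q.1 * h' q.2) q ∂(ν.prod ν)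
      = ∫ q, D2.indicator (fun q : ℝ × ℝ => h' q.1 * g' q.2) q ∂(ν.prod ν) := by
    have h1 : (fun q : ℝ × ℝ => D1.indicator (fun q : ℝ × ℝ => g' q.1 * h' q.2) q)
        = fun q : ℝ × ℝ => (D2.indicator (fun q : ℝ × ℝ => h' q.1 * g' q.2)) q.swap := by
      ext q
      by_cases h : q.2 ≤ q.1 <;>
        simp [Set.indicator_apply, hD1, hD2, h, Prod.swap, mul_comm]
    rw [h1]
    exact MeasureTheory.integral_prod_swap _
  -- sum of the two indicator integrals
  have hdiag : (ν.prod ν) {q : ℝ × ℝ | q.1 = q.2} = 0 := by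
    have hm : MeasurableSet {q : ℝ × ℝ | q.1 = q.2} :=
      measurableSet_eq_fun measurable_fst measurable_snd
    rw [Measure.prod_apply hm]
    have h0 : ∀ s : ℝ, ν (Prod.mk s ⁻¹' {q : ℝ × ℝ | q.1 = q.2}) = 0 := by
      intro s
      have : Prod.mk s ⁻¹' {q : ℝ × ℝ | q.1 = q.2} = {s} := by ext t; simp [eq_comm]
      rw [this]
      exact measure_singleton s
    simp [h0]
  have hFint : Integrable (fun q : ℝ × ℝ => h' q.1 * g' q.2) (ν.prod ν) := hh'.mul_prod hg'
  have hsum : (∫ q, D1.indicator (fun q : ℝ × ℝ => h' q.1 * g' q.2) q ∂(ν.prod ν))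
      + (∫ q, D2.indicator (fun q : ℝ × ℝ => h' q.1 * g' q.2) q ∂(ν.prod ν))
      = (∫ s, h' s ∂ν) * ∫ s, g' s ∂ν := by
    rw [← integral_add (hFint.indicator hD1m) (hFint.indicator hD2m),
      ← MeasureTheory.integral_prod_mul (μ := ν) (ν := ν) h' g']
    apply integral_congr_ae
    have hae : ∀ᵐ q ∂(ν.prod ν), q.1 ≠ (q.2 : ℝ) := by
      rw [ae_iff]
      convert hdiag using 2
      simp
    filter_upwards [hae] with q hq
    rcases lt_or_gt_of_ne hq with h | h
    · simp [Set.indicator_apply, hD1, hD2, le_of_lt h, not_le.2 h]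
    · simp [Set.indicator_apply, hD1, hD2, le_of_lt h, not_le.2 h]
  -- put things together
  have hsplit : ∫ s in Ioc x y, (h' s * G s + H s * g' s)
      = ∫ s, (h' s * G x + H x * g' s + (P s * h' s + Q s * g' s)) ∂ν := by
    apply setIntegral_congr_fun measurableSet_Ioc
    intro s hs
    show h' s * G s + H s * g' s
        = h' s * G x + H x * g' s + (P s * h' s + Q s * g' s)
    rw [hH s (Ioc_subset_Icc_self hs), hG s (Ioc_subset_Icc_self hs)]
    ring
  have hHy := hH y ⟨hxy, le_rfl⟩
  have hGy := hG y ⟨hxy, le_rfl⟩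
  rw [hsplit,
    integral_add (f := fun s => h' s * G x + H x * g' s)
      (g := fun s => P s * h' s + Q s * g' s) (hi1.add hi2) (hi3.add hi4),
    integral_add (f := fun s => h' s * G x) (g := fun s => H x * g' s) hi1 hi2,
    integral_add (f := fun s => P s * h' s) (g := fun s => Q s * g' s) hi3 hi4,
    integral_mul_const, integral_const_mul, hI3, hI4, hswap, hsum, hHy, hGy]
  ring

lemma key_aux (a b : EReal) (z : ℝ) (hza : a < (z : EReal)) (hzb : (z : EReal) < b)
    (f H : ℝ → ℝ) (hf : Integrable f)
    (hf0 : ∀ u : ℝ, ¬(a < (u : EReal) ∧ (u : EReal) < b) → f u = 0)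
    (hFTC : ∀ x : ℝ, a < (x : EReal) → (x : EReal) < b → ∀ y : ℝ, a < (y : EReal) →
      (y : EReal) < b → x ≤ y → H y - H x = ∫ t in Ioc x y, f t)
    (hlima : Tendsto H (Filter.comap (fun x : ℝ => (x : EReal)) (nhdsWithin a (Ioi a)))
      (nhds 0))
    (hlimb : Tendsto H (Filter.comap (fun x : ℝ => (x : EReal)) (nhdsWithin b (Iio b)))
      (nhds 0)) :
    ∫ u, f u = 0 := by
  set la := Filter.comap (fun x : ℝ => (x : EReal)) (nhdsWithin a (Ioi a)) with hla
  set lb := Filter.comap (fun x : ℝ => (x : EReal)) (nhdsWithin b (Iio b)) with hlb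
  have hlaBot : la.NeBot := by
    rw [hla, Filter.comap_neBot_iff]
    intro t ht
    rw [mem_nhdsWithin] at ht
    obtain ⟨V, hVopen, haV, hVsub⟩ := ht
    obtain ⟨u', hu', hIco⟩ := exists_Ico_subset_of_mem_nhds' (hVopen.mem_nhds haV) hza
    obtain ⟨w, hw1, hw2⟩ := exists_between hu'.1
    have hwbot : w ≠ ⊥ := ne_bot_of_gt hw1
    have hwtop : w ≠ ⊤ := ne_top_of_lt (hw2.trans_le hu'.2)
    refine ⟨w.toReal, hVsub ⟨hIco ?_, ?_⟩⟩
    · rw [EReal.coe_toReal hwtop hwbot]; exact ⟨le_of_lt hw1, hw2⟩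
    · rw [mem_Ioi, EReal.coe_toReal hwtop hwbot]; exact hw1
  have hlbBot : lb.NeBot := by
    rw [hlb, Filter.comap_neBot_iff]
    intro t ht
    rw [mem_nhdsWithin] at ht
    obtain ⟨V, hVopen, hbV, hVsub⟩ := ht
    obtain ⟨l', hl', hIoc⟩ := exists_Ioc_subset_of_mem_nhds' (hVopen.mem_nhds hbV) hzb
    obtain ⟨w, hw1, hw2⟩ := exists_between hl'.2
    have hwtop : w ≠ ⊤ := ne_top_of_lt hw2
    have hwbot : w ≠ ⊥ := ne_bot_of_gt (hl'.1.trans_lt hw1)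
    refine ⟨w.toReal, hVsub ⟨hIoc ?_, ?_⟩⟩
    · rw [EReal.coe_toReal hwtop hwbot]; exact ⟨hw1, le_of_lt hw2⟩
    · rw [mem_Iio, EReal.coe_toReal hwtop hwbot]; exact hw2
  obtain ⟨xs, hxs⟩ := la.exists_seq_tendsto
  obtain ⟨ys, hys⟩ := lb.exists_seq_tendsto
  have h1 : Tendsto (fun n => ((xs n : ℝ) : EReal)) atTop (nhdsWithin a (Ioi a)) :=
    (tendsto_comap (f := fun x : ℝ => (x : EReal))).comp hxs
  have h1' : Tendsto (fun n => ((xs n : ℝ) : EReal)) atTop (nhds a) :=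
    h1.mono_right nhdsWithin_le_nhds
  have h2 : Tendsto (fun n => ((ys n : ℝ) : EReal)) atTop (nhdsWithin b (Iio b)) :=
    (tendsto_comap (f := fun x : ℝ => (x : EReal))).comp hys
  have h2' : Tendsto (fun n => ((ys n : ℝ) : EReal)) atTop (nhds b) :=
    h2.mono_right nhdsWithin_le_nhds
  have hxa : ∀ᶠ n in atTop, a < ((xs n : ℝ) : EReal) :=
    h1.eventually eventually_mem_nhdsWithin
  have hxz : ∀ᶠ n in atTop, ((xs n : ℝ) : EReal) < (z : EReal) := h1'.eventually_lt_const hza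
  have hyb : ∀ᶠ n in atTop, ((ys n : ℝ) : EReal) < b :=
    h2.eventually eventually_mem_nhdsWithin
  have hyz : ∀ᶠ n in atTop, (z : EReal) < ((ys n : ℝ) : EReal) := h2'.eventually_const_lt hzb
  -- sets
  set T₁ : Set ℝ := {u : ℝ | a < (u : EReal) ∧ u ≤ z} with hT₁
  set T₂ : Set ℝ := {u : ℝ | z < u ∧ (u : EReal) < b} with hT₂
  have hmco : Measurable (fun u : ℝ => (u : EReal)) := continuous_coe_real_ereal.measurable
  have hT₁m : MeasurableSet T₁ := (hmco measurableSet_Ioi).inter measurableSet_Iic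
  have hT₂m : MeasurableSet T₂ := measurableSet_Ioi.inter (hmco measurableSet_Iio)
  -- limit of H along the sequences
  have hHx : Tendsto (fun n => H (xs n)) atTop (nhds 0) := hlima.comp hxs
  have hHy : Tendsto (fun n => H (ys n)) atTop (nhds 0) := hlimb.comp hys
  -- DCT for the left part
  have hdct₁ : Tendsto (fun n => ∫ t in Ioc (xs n) z, f t) atTop (nhds (∫ u in T₁, f u)) := by
    simp only [← integral_indicator measurableSet_Ioc, ← integral_indicator hT₁m]
    apply tendsto_integral_filter_of_dominated_convergence (fun u => ‖f u‖)
    · exact Eventually.of_forall fun n =>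
        hf.aestronglyMeasurable.indicator measurableSet_Ioc
    · exact Eventually.of_forall fun n => ae_of_all _ fun u => norm_indicator_le_norm_self _ _
    · exact hf.norm
    · refine ae_of_all _ fun u => ?_
      by_cases h : a < (u : EReal) ∧ u ≤ z
      · have : ∀ᶠ n in atTop, (Ioc (xs n) z).indicator f u = T₁.indicator f u := by
          filter_upwards [h1'.eventually_lt_const h.1] with n hn
          have hmem : u ∈ Ioc (xs n) z := ⟨EReal.coe_lt_coe_iff.1 hn, h.2⟩
          have hmem' : u ∈ T₁ := h
          rw [indicator_of_mem hmem, indicator_of_mem hmem']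
        exact Tendsto.congr' (this.mono fun n hn => hn.symm) tendsto_const_nhds
      · have hnT : u ∉ T₁ := h
        rw [indicator_of_notMem hnT]
        push_neg at h
        by_cases hau : a < (u : EReal)
        · have hzu : z < u := h hau
          have : ∀ᶠ n in atTop, (Ioc (xs n) z).indicator f u = 0 := by
            refine Eventually.of_forall fun n => indicator_of_notMem (fun hu => ?_) f
            exact absurd hu.2 (not_le.2 hzu)
          exact Tendsto.congr' (this.mono fun n hn => hn.symm) tendsto_const_nhds
        · have : ∀ᶠ n in atTop, (Ioc (xs n) z).indicator f u = 0 := by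
            filter_upwards [hxa] with n hn
            refine indicator_of_notMem (fun hu => ?_) f
            have : (u : EReal) < (xs n : EReal) := (not_lt.1 hau).trans_lt hn
            exact absurd hu.1 (not_lt.2 (le_of_lt (EReal.coe_lt_coe_iff.1 this)))
          exact Tendsto.congr' (this.mono fun n hn => hn.symm) tendsto_const_nhds
  -- DCT for the right part
  have hdct₂ : Tendsto (fun n => ∫ t in Ioc z (ys n), f t) atTop (nhds (∫ u in T₂, f u)) := by
    simp only [← integral_indicator measurableSet_Ioc, ← integral_indicator hT₂m]
    apply tendsto_integral_filter_of_dominated_convergence (fun u => ‖f u‖)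
    · exact Eventually.of_forall fun n =>
        hf.aestronglyMeasurable.indicator measurableSet_Ioc
    · exact Eventually.of_forall fun n => ae_of_all _ fun u => norm_indicator_le_norm_self _ _
    · exact hf.norm
    · refine ae_of_all _ fun u => ?_
      by_cases h : z < u ∧ (u : EReal) < b
      · have : ∀ᶠ n in atTop, (Ioc z (ys n)).indicator f u = T₂.indicator f u := by
          filter_upwards [h2'.eventually_const_lt h.2] with n hn
          have hmem : u ∈ Ioc z (ys n) := ⟨h.1, le_of_lt (EReal.coe_lt_coe_iff.1 hn)⟩
          have hmem' : u ∈ T₂ := h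
          rw [indicator_of_mem hmem, indicator_of_mem hmem']
        exact Tendsto.congr' (this.mono fun n hn => hn.symm) tendsto_const_nhds
      · have hnT : u ∉ T₂ := h
        rw [indicator_of_notMem hnT]
        push_neg at h
        by_cases hzu : z < u
        · have hub : b ≤ (u : EReal) := h hzu
          have : ∀ᶠ n in atTop, (Ioc z (ys n)).indicator f u = 0 := by
            filter_upwards [hyb] with n hn
            refine indicator_of_notMem (fun hu => ?_) f
            have : ((ys n : ℝ) : EReal) < (u : EReal) := hn.trans_le hub
            exact absurd hu.2 (not_le.2 (EReal.coe_lt_coe_iff.1 this))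
          exact Tendsto.congr' (this.mono fun n hn => hn.symm) tendsto_const_nhds
        · have : ∀ᶠ n in atTop, (Ioc z (ys n)).indicator f u = 0 := by
            refine Eventually.of_forall fun n => indicator_of_notMem (fun hu => ?_) f
            exact absurd hu.1 hzu
          exact Tendsto.congr' (this.mono fun n hn => hn.symm) tendsto_const_nhds
  -- FTC along the sequences
  have hftc₁ : ∀ᶠ n in atTop, ∫ t in Ioc (xs n) z, f t = H z - H (xs n) := by
    filter_upwards [hxa, hxz] with n hn1 hn2
    exact (hFTC (xs n) hn1 (hn2.trans hzb) z hza hzb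
      (le_of_lt (EReal.coe_lt_coe_iff.1 hn2))).symm
  have hftc₂ : ∀ᶠ n in atTop, ∫ t in Ioc z (ys n), f t = H (ys n) - H z := by
    filter_upwards [hyb, hyz] with n hn1 hn2
    exact (hFTC z hza hzb (ys n) (hza.trans hn2) hn1
      (le_of_lt (EReal.coe_lt_coe_iff.1 hn2))).symm
  have hlim₁ : Tendsto (fun n => ∫ t in Ioc (xs n) z, f t) atTop (nhds (H z)) := by
    refine Tendsto.congr' (EventuallyEq.symm hftc₁) ?_
    have := (tendsto_const_nhds (x := H z) (f := atTop (α := ℕ))).sub hHx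
    simpa using this
  have hlim₂ : Tendsto (fun n => ∫ t in Ioc z (ys n), f t) atTop (nhds (-H z)) := by
    refine Tendsto.congr' (EventuallyEq.symm hftc₂) ?_
    have := hHy.sub (tendsto_const_nhds (x := H z) (f := atTop (α := ℕ)))
    simpa using this
  have hT₁ : ∫ u in T₁, f u = H z := tendsto_nhds_unique hdct₁ hlim₁
  have hT₂v : ∫ u in T₂, f u = -H z := tendsto_nhds_unique hdct₂ hlim₂
  -- assemble
  have hind : ∀ u, f u = (T₁ ∪ T₂).indicator f u := by
    intro u
    by_cases h : u ∈ T₁ ∪ T₂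
    · rw [indicator_of_mem h]
    · rw [indicator_of_notMem h]
      apply hf0
      rintro ⟨hau, hub⟩
      rcases le_or_gt u z with hz' | hz'
      · exact h (Or.inl ⟨hau, hz'⟩)
      · exact h (Or.inr ⟨hz', hub⟩)
  have hdisj : Disjoint T₁ T₂ := by
    rw [Set.disjoint_left]
    rintro u ⟨_, h1'⟩ ⟨h2', _⟩
    exact absurd h2' (not_lt.2 h1')
  calc ∫ u, f u = ∫ u, (T₁ ∪ T₂).indicator f u := by
        exact integral_congr_ae (ae_of_all _ hind)
    _ = ∫ u in T₁ ∪ T₂, f u := integral_indicator (hT₁m.union hT₂m)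
    _ = (∫ u in T₁, f u) + ∫ u in T₂, f u :=
        setIntegral_union hdisj hT₂m hf.integrableOn hf.integrableOn
    _ = 0 := by rw [hT₁, hT₂v]; ring

/-- Stein integration-by-parts formulas, continuous case, for a probability density `p`
positive exactly on the open interval `S = (a,b)`:
(i) `E[c(X) g₁'(X)] = −E[((cp)'(X)/p(X)) g₁(X)]` whenever `cp` is locally absolutely
continuous on `S` with derivative `d = (cp)'`, with vanishing boundary behaviour;
(ii) `E[(−L_p η (X)) g₂'(X)] = E[η(X) g₂(X)]` for mean-zero `η`, where
`L_p η (x) = (1/p(x)) ∫_a^x η(u)p(u)du`, with vanishing boundary behaviour. -/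
theorem stein_ibp_continuous
    (p : ℝ → ℝ) (a b : EReal) (hab : a < b)
    (hpmeas : Measurable p) (hp0 : ∀ x, 0 ≤ p x)
    (hppos : ∀ x : ℝ, 0 < p x ↔ a < (x : EReal) ∧ (x : EReal) < b)
    (hp1 : ∫ x, p x = 1)
    -- data for part (i)
    (c d g₁ g₁' : ℝ → ℝ)
    (hcmeas : Measurable c) (hdmeas : Measurable d)
    (hg₁meas : Measurable g₁) (hg₁'meas : Measurable g₁')
    (hcd : LocAC {x : ℝ | a < (x : EReal) ∧ (x : EReal) < b} (fun x => c x * p x) d)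
    (hACg₁ : LocAC {x : ℝ | a < (x : EReal) ∧ (x : EReal) < b} g₁ g₁')
    (hlim₁a : Tendsto (fun x : ℝ => c x * g₁ x * p x)
      (Filter.comap (fun x : ℝ => (x : EReal)) (nhdsWithin a (Ioi a))) (nhds 0))
    (hlim₁b : Tendsto (fun x : ℝ => c x * g₁ x * p x)
      (Filter.comap (fun x : ℝ => (x : EReal)) (nhdsWithin b (Iio b))) (nhds 0))
    (hint₁ : Integrable (fun x => c x * g₁' x * p x))
    (hint₂ : Integrable (fun x => (d x / p x) * g₁ x * p x))
    -- data for part (ii)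
    (η L g₂ g₂' : ℝ → ℝ)
    (hηmeas : Measurable η) (hg₂meas : Measurable g₂) (hg₂'meas : Measurable g₂')
    (hηint : Integrable (fun x => η x * p x))
    (hηmean : ∫ x, η x * p x = 0)
    (hL : ∀ x, L x = (∫ u in Iio x, η u * p u) / p x)
    (hACg₂ : LocAC {x : ℝ | a < (x : EReal) ∧ (x : EReal) < b} g₂ g₂')
    (hlim₂a : Tendsto (fun x : ℝ => L x * g₂ x * p x)
      (Filter.comap (fun x : ℝ => (x : EReal)) (nhdsWithin a (Ioi a))) (nhds 0))
    (hlim₂b : Tendsto (fun x : ℝ => L x * g₂ x * p x)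
      (Filter.comap (fun x : ℝ => (x : EReal)) (nhdsWithin b (Iio b))) (nhds 0))
    (hint₃ : Integrable (fun x => L x * g₂' x * p x))
    (hint₄ : Integrable (fun x => η x * g₂ x * p x)) :
    (∫ x, c x * g₁' x * p x = -∫ x, (d x / p x) * g₁ x * p x) ∧
    (∫ x, (-(L x)) * g₂' x * p x = ∫ x, η x * g₂ x * p x) := by
  set S : Set ℝ := {x : ℝ | a < (x : EReal) ∧ (x : EReal) < b} with hS
  obtain ⟨w, hw1, hw2⟩ := exists_between hab
  have hwbot : w ≠ ⊥ := ne_bot_of_gt hw1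
  have hwtop : w ≠ ⊤ := ne_top_of_lt hw2
  set z : ℝ := w.toReal with hz
  have hza : a < (z : EReal) := by rw [hz, EReal.coe_toReal hwtop hwbot]; exact hw1
  have hzb : (z : EReal) < b := by rw [hz, EReal.coe_toReal hwtop hwbot]; exact hw2
  have pzero : ∀ u : ℝ, ¬(a < (u : EReal) ∧ (u : EReal) < b) → p u = 0 := fun u h =>
    le_antisymm (not_lt.1 fun hp => h ((hppos u).1 hp)) (hp0 u)
  have hconv : ∀ x : ℝ, a < (x : EReal) → ∀ y : ℝ, (y : EReal) < b →
      ∀ u ∈ Icc x y, u ∈ S := by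
    intro x hax y hyb u hu
    exact ⟨lt_of_lt_of_le hax (EReal.coe_le_coe_iff.2 hu.1),
      lt_of_le_of_lt (EReal.coe_le_coe_iff.2 hu.2) hyb⟩
  constructor
  · -- part (i)
    have h0 : ∫ u, (c u * g₁' u * p u + (d u / p u) * g₁ u * p u) = 0 := by
      refine key_aux a b z hza hzb _ (fun u => c u * g₁ u * p u) (hint₁.add hint₂)
        ?_ ?_ hlim₁a hlim₁b
      · intro u h
        rw [pzero u h]; ring
      · intro x hax hxb y hay hyb hxy
        have hxS : x ∈ S := ⟨hax, hxb⟩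
        have hyS : y ∈ S := ⟨hay, hyb⟩
        have hd : IntegrableOn d (Ioc x y) := ((hcd x hxS y hyS).1).1
        have hg : IntegrableOn g₁' (Ioc x y) := ((hACg₁ x hxS y hyS).1).1
        have hHh : ∀ u ∈ Icc x y, c u * p u = c x * p x + ∫ t in Ioc x u, d t := by
          intro u hu
          have h2 := (hcd x hxS u (hconv x hax y hyb u hu)).2
          rw [intervalIntegral.integral_of_le hu.1] at h2
          have h2' : c u * p u - c x * p x = ∫ t in Ioc x u, d t := h2
          linarith
        have hGg : ∀ u ∈ Icc x y, g₁ u = g₁ x + ∫ t in Ioc x u, g₁' t := by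
          intro u hu
          have h2 := (hACg₁ x hxS u (hconv x hax y hyb u hu)).2
          rw [intervalIntegral.integral_of_le hu.1] at h2
          have h2' : g₁ u - g₁ x = ∫ t in Ioc x u, g₁' t := h2
          linarith
        have hkey := ibp_aux x y hxy (fun u => c u * p u) g₁ d g₁' hd hg hHh hGg
        have hcg : ∫ s in Ioc x y, (c s * g₁' s * p s + (d s / p s) * g₁ s * p s)
            = ∫ s in Ioc x y, (d s * g₁ s + c s * p s * g₁' s) := by
          apply setIntegral_congr_fun measurableSet_Ioc
          intro s hs
          have hps : p s ≠ 0 :=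
            ne_of_gt ((hppos s).2 (hconv x hax y hyb s (Ioc_subset_Icc_self hs)))
          show c s * g₁' s * p s + (d s / p s) * g₁ s * p s
              = d s * g₁ s + c s * p s * g₁' s
          field_simp
          ring
        show c y * g₁ y * p y - c x * g₁ x * p x
            = ∫ t in Ioc x y, (c t * g₁' t * p t + (d t / p t) * g₁ t * p t)
        rw [hcg, hkey]
        ring
    rw [integral_add hint₁ hint₂] at h0
    linarith
  · -- part (ii)
    set M : ℝ → ℝ := fun u => ∫ t in Iio u, η t * p t with hM
    have hMd : ∀ x y : ℝ, x ≤ y → M y - M x = ∫ t in Ioc x y, η t * p t := by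
      intro x y hxy
      have h1 : M y = ∫ t in Iic y, η t * p t := setIntegral_congr_set Iio_ae_eq_Iic
      have h2 : M x = ∫ t in Iic x, η t * p t := setIntegral_congr_set Iio_ae_eq_Iic
      rw [h1, h2, intervalIntegral.integral_Iic_sub_Iic hηint.integrableOn hηint.integrableOn,
        intervalIntegral.integral_of_le hxy]
    have h0 : ∫ u, (η u * g₂ u * p u + L u * g₂' u * p u) = 0 := by
      refine key_aux a b z hza hzb _ (fun u => L u * g₂ u * p u) (hint₄.add hint₃)
        ?_ ?_ hlim₂a hlim₂b
      · intro u h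
        rw [pzero u h]; ring
      · intro x hax hxb y hay hyb hxy
        have hxS : x ∈ S := ⟨hax, hxb⟩
        have hyS : y ∈ S := ⟨hay, hyb⟩
        have hg : IntegrableOn g₂' (Ioc x y) := ((hACg₂ x hxS y hyS).1).1
        have hη' : IntegrableOn (fun t => η t * p t) (Ioc x y) := hηint.integrableOn
        have hHh : ∀ u ∈ Icc x y, M u = M x + ∫ t in Ioc x u, η t * p t := by
          intro u hu
          have := hMd x u hu.1
          linarith
        have hGg : ∀ u ∈ Icc x y, g₂ u = g₂ x + ∫ t in Ioc x u, g₂' t := by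
          intro u hu
          have h2 := (hACg₂ x hxS u (hconv x hax y hyb u hu)).2
          rw [intervalIntegral.integral_of_le hu.1] at h2
          have h2' : g₂ u - g₂ x = ∫ t in Ioc x u, g₂' t := h2
          linarith
        have hkey := ibp_aux x y hxy M g₂ (fun t => η t * p t) g₂' hη' hg hHh hGg
        have hcg : ∫ s in Ioc x y, (η s * g₂ s * p s + L s * g₂' s * p s)
            = ∫ s in Ioc x y, (η s * p s * g₂ s + M s * g₂' s) := by
          apply setIntegral_congr_fun measurableSet_Ioc
          intro s hs
          have hps : p s ≠ 0 :=
            ne_of_gt ((hppos s).2 (hconv x hax y hyb s (Ioc_subset_Icc_self hs)))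
          have hLM : L s = M s / p s := hL s
          show η s * g₂ s * p s + L s * g₂' s * p s = η s * p s * g₂ s + M s * g₂' s
          rw [hLM]
          field_simp
        have hpy : p y ≠ 0 := ne_of_gt ((hppos y).2 hyS)
        have hpx : p x ≠ 0 := ne_of_gt ((hppos x).2 hxS)
        have hLy : L y = M y / p y := hL y
        have hLx : L x = M x / p x := hL x
        show L y * g₂ y * p y - L x * g₂ x * p x
            = ∫ t in Ioc x y, (η t * g₂ t * p t + L t * g₂' t * p t)
        rw [hLy, hLx, hcg, hkey]
        field_simp
    rw [integral_add hint₄ hint₃] at h0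
    have hneg : ∫ x, (-(L x)) * g₂' x * p x = -∫ x, L x * g₂' x * p x := by
      rw [← integral_neg]
      congr 1
      funext u
      ring
    rw [hneg]
    linarith
end

section
/- (Representation formula II, continuous case.) Let p be a probability density on ℝ positive exactly on the open interval S = (a, b), with cumulative distribution function F, and let X, X₁, X₂ be i.i.d. with density p. Define K_p(x, x') = F(min(x, x')) − F(x) F(x'). Then: (i) 0 ≤ K_p(x, x') ≤ 1 for all x, x' (indeed K_p(x,x') = F(min(x,x'))(1 − F(max(x,x'))) ≥ 0); (ii) for all locally absolutely continuous h, g with E[h(X)²] < ∞, E[g(X)²] < ∞ and the double integral below absolutely convergent, Cov[h(X), g(X)] = ∫_S ∫_S h'(x) K_p(x, x') g'(x') dx dx' = E[h'(X₁) (K_p(X₁, X₂)/(p(X₁) p(X₂))) g'(X₂)]; (iii) for every locally absolutely continuous h with E|h(X)| < ∞ and E[|h'(X)| K_p(X, x')/p(X)] < ∞, one has −L_p h(x') = E[(K_p(X, x')/(p(X) p(x'))) h'(X)] for every x' ∈ S. -/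
/-!
Write `W(u, v, s) = 1{u ≤ s} - 1{v ≤ s}` (`signedIndicator`), so that
`h v - h u = ∫ h'(s) W(u, v, s) ds` for `u, v ∈ S`. For i.i.d. `X₁, X₂` one has
`E[(f(X₂) - f(X₁))(g(X₂) - g(X₁))] = 2 Cov(f(X), g(X))`; with `f = 1{· ≤ s}` and `g = 1{· ≤ t}`
this reads `E[W(X₁, X₂, s) W(X₁, X₂, t)] = 2 K_p(s, t)`. Applying it to `h` and `g`, writing both
increments as integrals of `h'` and `g'` against `W` and exchanging the order of integration gives
(ii). Since `W(u, v, s) W(u, v, t) ≥ 0`, Tonelli shows that the integrability of `h' K_p g'` is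
exactly what Fubini needs. Part (iii) is the same computation with `g = 1{· ≤ x'}`, whose derivative
is minus the point mass at `x'`.
-/

open MeasureTheory Set

/-- The cumulative distribution function of the density `p`. -/
noncomputable def cdfOf (p : ℝ → ℝ) (x : ℝ) : ℝ := ∫ u in Iic x, p u

/-- The covariance kernel `K_p(x,x') = F(min(x,x')) − F(x)F(x')`. -/
noncomputable def kerK (p : ℝ → ℝ) (x x' : ℝ) : ℝ :=
  cdfOf p (min x x') - cdfOf p x * cdfOf p x'

/-- The inverse Stein operator
`L_p h (x) = (1/p(x)) ∫_a^x (h(u) − E[h(X)]) p(u) du`. -/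
noncomputable def invStein (p h : ℝ → ℝ) (x : ℝ) : ℝ :=
  (∫ u in Iio x, (h u - ∫ y, h y * p y) * p u) / p x

open ProbabilityTheory

theorem integral_prod_sub_mul_sub {α : Type*} [MeasurableSpace α] {μ : Measure α}
    [IsProbabilityMeasure μ] {f g : α → ℝ} (hf : Integrable f μ) (hg : Integrable g μ)
    (hfg : Integrable (fun x => f x * g x) μ) :
    ∫ r, (f r.2 - f r.1) * (g r.2 - g r.1) ∂μ.prod μ
      = 2 * (∫ x, f x * g x ∂μ - (∫ x, f x ∂μ) * ∫ x, g x ∂μ) := by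
  have expand : (fun r : α × α => (f r.2 - f r.1) * (g r.2 - g r.1))
      = fun r => (f r.2 * g r.2 + f r.1 * g r.1) - (f r.1 * g r.2 + g r.1 * f r.2) := by
    funext r; ring
  have hfg₂ := hfg.comp_snd μ
  have hfg₁ := hfg.comp_fst μ
  rw [expand, integral_sub (hfg₂.fun_add hfg₁) ((hf.mul_prod hg).fun_add (hg.mul_prod hf)),
    integral_add hfg₂ hfg₁, integral_add (hf.mul_prod hg) (hg.mul_prod hf),
    integral_fun_snd (fun x => f x * g x), integral_fun_fst (fun x => f x * g x),
    integral_prod_mul, integral_prod_mul]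
  simp only [probReal_univ, one_smul]
  ring

lemma integrable_prod_dirac_iff {α β E : Type*} [MeasurableSpace α] [MeasurableSpace β]
    [MeasurableSingletonClass β] [NormedAddCommGroup E] {μ : Measure α} [SFinite μ]
    {f : α × β → E} {y : β} :
    Integrable f (μ.prod (Measure.dirac y)) ↔ Integrable (fun x => f (x, y)) μ := by
  rw [Measure.prod_dirac, (measurableEmbedding_prod_mk_right y).integrable_map_iff]
  rfl

lemma integral_prod_dirac {α β E : Type*} [MeasurableSpace α] [MeasurableSpace β]
    [MeasurableSingletonClass β] [NormedAddCommGroup E] [NormedSpace ℝ E] {μ : Measure α}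
    [SFinite μ] (f : α × β → E) (y : β) :
    ∫ q, f q ∂μ.prod (Measure.dirac y) = ∫ x, f (x, y) ∂μ := by
  rw [Measure.prod_dirac, (measurableEmbedding_prod_mk_right y).integral_map]

noncomputable def signedIndicator (u v s : ℝ) : ℝ :=
  (Iic s).indicator 1 u - (Iic s).indicator 1 v

lemma measurable_signedIndicator :
    Measurable fun x : ℝ × ℝ × ℝ => signedIndicator x.1 x.2.1 x.2.2 := by
  unfold signedIndicator
  simp only [indicator_apply, mem_Iic, Pi.one_apply]
  refine Measurable.sub ?_ ?_ <;>
    exact Measurable.ite (measurableSet_le (by fun_prop) (by fun_prop)) measurable_const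
      measurable_const

lemma signedIndicator_mul_nonneg (u v s t : ℝ) :
    0 ≤ signedIndicator u v s * signedIndicator u v t := by
  simp only [signedIndicator, indicator_apply, mem_Iic, Pi.one_apply]
  rcases le_total u v with huv | hvu
  · apply mul_nonneg <;> split_ifs <;> grind
  · apply mul_nonneg_of_nonpos_of_nonpos <;> split_ifs <;> grind

lemma abs_signedIndicator_le_one (u v s : ℝ) : |signedIndicator u v s| ≤ 1 := by
  simp only [signedIndicator, indicator_apply, mem_Iic, Pi.one_apply]
  split_ifs <;> norm_num

lemma integral_mul_signedIndicator (f : ℝ → ℝ) (u v : ℝ) :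
    ∫ s, f s * signedIndicator u v s = ∫ s in u..v, f s := by
  rcases le_total u v with huv | hvu
  · have : ∀ s, f s * signedIndicator u v s = (Ico u v).indicator f s := by
      intro s
      simp only [signedIndicator, indicator_apply, mem_Iic, mem_Ico, Pi.one_apply]
      split_ifs <;> grind
    simp_rw [this, integral_indicator measurableSet_Ico, integral_Ico_eq_integral_Ioc,
      intervalIntegral.integral_of_le huv]
  · have : ∀ s, f s * signedIndicator u v s = -(Ico v u).indicator f s := by
      intro s
      simp only [signedIndicator, indicator_apply, mem_Iic, mem_Ico, Pi.one_apply]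
      split_ifs <;> grind
    simp_rw [this, integral_neg, integral_indicator measurableSet_Ico,
      integral_Ico_eq_integral_Ioc, intervalIntegral.integral_of_ge hvu]

lemma signedIndicator_eq_zero_of_notMem {S : Set ℝ} (hS : S.OrdConnected) {u v s : ℝ}
    (hu : u ∈ S) (hv : v ∈ S) (hs : s ∉ S) : signedIndicator u v s = 0 := by
  have hu' : ¬ (u ≤ s ∧ s ≤ v) := fun h => hs (hS.out hu hv h)
  have hv' : ¬ (v ≤ s ∧ s ≤ u) := fun h => hs (hS.out hv hu h)
  simp only [signedIndicator, indicator_apply, mem_Iic, Pi.one_apply]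
  split_ifs <;> grind

theorem LocAC.setIntegral_mul_signedIndicator {S : Set ℝ} (hS : S.OrdConnected) {h h' : ℝ → ℝ}
    (hh : LocAC S h h') {u v : ℝ} (hu : u ∈ S) (hv : v ∈ S) :
    ∫ s in S, h' s * signedIndicator u v s = h v - h u := by
  rw [setIntegral_eq_integral_of_forall_compl_eq_zero fun s hs => by
      rw [signedIndicator_eq_zero_of_notMem hS hu hv hs, mul_zero],
    integral_mul_signedIndicator, (hh u hu v hv).2]

section CovKernel

variable {μ : Measure ℝ}

noncomputable def covKernel (μ : Measure ℝ) (s t : ℝ) : ℝ :=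
  cdf μ (min s t) - cdf μ s * cdf μ t

lemma covKernel_eq_mul (s t : ℝ) :
    covKernel μ s t = cdf μ (min s t) * (1 - cdf μ (max s t)) := by
  rcases le_total s t with hst | hts
  · rw [covKernel, min_eq_left hst, max_eq_right hst]; ring
  · rw [covKernel, min_eq_right hts, max_eq_left hts]; ring

lemma covKernel_nonneg (s t : ℝ) : 0 ≤ covKernel μ s t := by
  rw [covKernel_eq_mul]
  exact mul_nonneg (cdf_nonneg μ _) (sub_nonneg.2 (cdf_le_one μ _))

lemma covKernel_le_one (s t : ℝ) : covKernel μ s t ≤ 1 := by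
  rw [covKernel_eq_mul]
  exact mul_le_one₀ (cdf_le_one μ _) (sub_nonneg.2 (cdf_le_one μ _))
    (by linarith [cdf_nonneg μ (max s t)])

lemma measurable_covKernel : Measurable fun q : ℝ × ℝ => covKernel μ q.1 q.2 := by
  have := (cdf μ).mono.measurable
  unfold covKernel
  fun_prop

theorem integral_signedIndicator_mul_signedIndicator [IsProbabilityMeasure μ] (s t : ℝ) :
    ∫ r, signedIndicator r.1 r.2 s * signedIndicator r.1 r.2 t ∂μ.prod μ
      = 2 * covKernel μ s t := by
  have hind (a : ℝ) : Integrable ((Iic a).indicator (1 : ℝ → ℝ)) μ :=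
    (integrable_const 1).indicator measurableSet_Iic
  have hcdf (a : ℝ) : ∫ x, (Iic a).indicator (1 : ℝ → ℝ) x ∂μ = cdf μ a := by
    rw [integral_indicator_one measurableSet_Iic, cdf_eq_real]
  have hprod : ∀ x, (Iic s).indicator (1 : ℝ → ℝ) x * (Iic t).indicator 1 x
      = (Iic (min s t)).indicator 1 x := fun x => by
    rw [← Iic_inter_Iic, inter_indicator_one, Pi.mul_apply]
  have key := integral_prod_sub_mul_sub (hind s) (hind t)
    ((hind (min s t)).congr (ae_of_all _ fun x => (hprod x).symm))
  simp_rw [hprod, hcdf] at key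
  rw [covKernel, ← key]
  congr 1 with r
  simp only [signedIndicator]
  ring

lemma integrable_mul_signedIndicator_mul_signedIndicator [IsProbabilityMeasure μ]
    {ρ : Measure (ℝ × ℝ)} [SFinite ρ] {h' g' : ℝ → ℝ} (hh' : Measurable h')
    (hg' : Measurable g')
    (hK : Integrable (fun q : ℝ × ℝ => h' q.1 * covKernel μ q.1 q.2 * g' q.2) ρ) :
    Integrable (fun w : (ℝ × ℝ) × (ℝ × ℝ) => h' w.1.1 * g' w.1.2 *
      (signedIndicator w.2.1 w.2.2 w.1.1 * signedIndicator w.2.1 w.2.2 w.1.2))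
      (ρ.prod (μ.prod μ)) := by
  have hW (i : (ℝ × ℝ) × (ℝ × ℝ) → ℝ) (hi : Measurable i) :
      Measurable fun w : (ℝ × ℝ) × (ℝ × ℝ) => signedIndicator w.2.1 w.2.2 (i w) :=
    measurable_signedIndicator.comp (measurable_snd.fst.prodMk (measurable_snd.snd.prodMk hi))
  have h_meas : Measurable fun w : (ℝ × ℝ) × (ℝ × ℝ) => h' w.1.1 * g' w.1.2 *
      (signedIndicator w.2.1 w.2.2 w.1.1 * signedIndicator w.2.1 w.2.2 w.1.2) :=
    ((hh'.comp (by fun_prop)).mul (hg'.comp (by fun_prop))).mul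
      ((hW (·.1.1) (by fun_prop)).mul (hW (·.1.2) (by fun_prop)))
  refine (integrable_prod_iff h_meas.aestronglyMeasurable).2 ⟨ae_of_all _ fun q => ?_, ?_⟩
  · refine (integrable_const ‖h' q.1 * g' q.2‖).mono'
      (h_meas.comp measurable_prodMk_left).aestronglyMeasurable (ae_of_all _ fun r => ?_)
    rw [norm_mul _ (_ * _)]
    refine mul_le_of_le_one_right (norm_nonneg _) ?_
    rw [norm_mul]
    exact mul_le_one₀ (abs_signedIndicator_le_one _ _ _) (norm_nonneg _)
      (abs_signedIndicator_le_one _ _ _)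
  · have (q r : ℝ × ℝ) : ‖h' q.1 * g' q.2 *
          (signedIndicator r.1 r.2 q.1 * signedIndicator r.1 r.2 q.2)‖
        = ‖h' q.1 * g' q.2‖ * (signedIndicator r.1 r.2 q.1 * signedIndicator r.1 r.2 q.2) := by
      rw [norm_mul, Real.norm_of_nonneg (signedIndicator_mul_nonneg _ _ _ _)]
    simp_rw [this, integral_const_mul, integral_signedIndicator_mul_signedIndicator]
    refine (hK.norm.const_mul 2).congr (ae_of_all _ fun q => ?_)
    simp only [norm_mul, Real.norm_of_nonneg (covKernel_nonneg q.1 q.2)]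
    ring

/-- `g' • ν` plays the role of the derivative of `φ`. -/
theorem integral_mul_sub_integral_mul_integral_eq_integral_covKernel
    [IsProbabilityMeasure μ] {S : Set ℝ} (hS : S.OrdConnected) (hμS : ∀ᵐ x ∂μ, x ∈ S)
    {ν : Measure ℝ} [SFinite ν] {h h' φ g' : ℝ → ℝ} (hh' : Measurable h') (hg' : Measurable g')
    (hh : LocAC S h h')
    (hφ : ∀ u ∈ S, ∀ v ∈ S, ∫ t, g' t * signedIndicator u v t ∂ν = φ v - φ u)
    (hh_int : Integrable h μ) (hφ_int : Integrable φ μ)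
    (hhφ_int : Integrable (fun x => h x * φ x) μ)
    (hK : Integrable (fun q : ℝ × ℝ => h' q.1 * covKernel μ q.1 q.2 * g' q.2)
      ((volume.restrict S).prod ν)) :
    ∫ x, h x * φ x ∂μ - (∫ x, h x ∂μ) * ∫ x, φ x ∂μ
      = ∫ q, h' q.1 * covKernel μ q.1 q.2 * g' q.2 ∂(volume.restrict S).prod ν := by
  set ρ := (volume.restrict S).prod ν
  let G : (ℝ × ℝ) × (ℝ × ℝ) → ℝ := fun w => h' w.1.1 * g' w.1.2 *
    (signedIndicator w.2.1 w.2.2 w.1.1 * signedIndicator w.2.1 w.2.2 w.1.2)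
  have integral_G_fst : ∀ᵐ r ∂μ.prod μ,
      ∫ q, G (q, r) ∂ρ = (h r.2 - h r.1) * (φ r.2 - φ r.1) := by
    filter_upwards [Measure.quasiMeasurePreserving_fst.ae hμS,
      Measure.quasiMeasurePreserving_snd.ae hμS] with r hu hv
    have (q : ℝ × ℝ) : G (q, r)
        = (h' q.1 * signedIndicator r.1 r.2 q.1) * (g' q.2 * signedIndicator r.1 r.2 q.2) := by
      ring
    simp_rw [this]
    rw [integral_prod_mul (fun s => h' s * signedIndicator r.1 r.2 s)
      (fun t => g' t * signedIndicator r.1 r.2 t), hh.setIntegral_mul_signedIndicator hS hu hv,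
      hφ _ hu _ hv]
  calc ∫ x, h x * φ x ∂μ - (∫ x, h x ∂μ) * ∫ x, φ x ∂μ
      = 2⁻¹ * ∫ r, (h r.2 - h r.1) * (φ r.2 - φ r.1) ∂μ.prod μ := by
        rw [integral_prod_sub_mul_sub hh_int hφ_int hhφ_int]; ring
    _ = 2⁻¹ * ∫ r, ∫ q, G (q, r) ∂ρ ∂μ.prod μ := by rw [integral_congr_ae integral_G_fst]
    _ = 2⁻¹ * ∫ q, ∫ r, G (q, r) ∂μ.prod μ ∂ρ := by
        rw [← integral_integral_swap
          (integrable_mul_signedIndicator_mul_signedIndicator hh' hg' hK)]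
    _ = ∫ q, h' q.1 * covKernel μ q.1 q.2 * g' q.2 ∂ρ := by
        simp only [G, integral_const_mul, integral_signedIndicator_mul_signedIndicator]
        rw [← integral_const_mul]
        congr 1 with q
        ring

theorem setIntegral_Iic_sub_integral_eq_neg_integral_covKernel [IsProbabilityMeasure μ]
    {S : Set ℝ} (hS : S.OrdConnected) (hμS : ∀ᵐ x ∂μ, x ∈ S) {h h' : ℝ → ℝ}
    (hh' : Measurable h') (hh : LocAC S h h') (hh_int : Integrable h μ) {x' : ℝ}
    (hK : IntegrableOn (fun s => h' s * covKernel μ s x') S) :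
    ∫ u in Iic x', (h u - ∫ y, h y ∂μ) ∂μ = -∫ s in S, h' s * covKernel μ s x' := by
  have hmul_indicator (u : ℝ) : h u * (Iic x').indicator 1 u = (Iic x').indicator h u := by
    by_cases hu : u ∈ Iic x' <;> simp [hu]
  have key := integral_mul_sub_integral_mul_integral_eq_integral_covKernel
    (ν := Measure.dirac x') (φ := (Iic x').indicator 1) (g' := fun _ => -1) hS hμS hh'
    measurable_const hh (fun u _ v _ => by simp [signedIndicator]) hh_int
    ((integrable_const 1).indicator measurableSet_Iic)
    ((hh_int.indicator measurableSet_Iic).congr (ae_of_all _ fun u => (hmul_indicator u).symm))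
    (integrable_prod_dirac_iff.2 (hK.mul_const (-1)))
  simp_rw [hmul_indicator, integral_prod_dirac, integral_mul_const,
    integral_indicator measurableSet_Iic, Pi.one_apply, setIntegral_const, smul_eq_mul,
    mul_one] at key
  rw [integral_sub hh_int.integrableOn (integrable_const _), setIntegral_const, smul_eq_mul]
  linarith

end CovKernel

section Density

variable {p : ℝ → ℝ}

noncomputable def densityLaw (p : ℝ → ℝ) : Measure ℝ :=
  volume.withDensity fun x => ENNReal.ofReal (p x)

lemma integral_densityLaw (hpmeas : Measurable p) (hp0 : ∀ x, 0 ≤ p x) (f : ℝ → ℝ) :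
    ∫ x, f x ∂densityLaw p = ∫ x, f x * p x := by
  rw [densityLaw, integral_withDensity_eq_integral_toReal_smul hpmeas.ennreal_ofReal
    (ae_of_all _ fun _ => ENNReal.ofReal_lt_top)]
  simp_rw [ENNReal.toReal_ofReal (hp0 _), smul_eq_mul, mul_comm]

lemma setIntegral_densityLaw (hpmeas : Measurable p) (hp0 : ∀ x, 0 ≤ p x) {s : Set ℝ}
    (hs : MeasurableSet s) (f : ℝ → ℝ) :
    ∫ x in s, f x ∂densityLaw p = ∫ x in s, f x * p x := by
  rw [← integral_indicator hs, integral_densityLaw hpmeas hp0, ← integral_indicator hs]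
  congr 1 with x
  by_cases hx : x ∈ s <;> simp [hx]

lemma integrable_densityLaw_iff (hpmeas : Measurable p) (hp0 : ∀ x, 0 ≤ p x) {f : ℝ → ℝ} :
    Integrable f (densityLaw p) ↔ Integrable fun x => f x * p x := by
  rw [densityLaw, integrable_withDensity_iff_integrable_smul' hpmeas.ennreal_ofReal
    (ae_of_all _ fun _ => ENNReal.ofReal_lt_top)]
  simp_rw [ENNReal.toReal_ofReal (hp0 _), smul_eq_mul, mul_comm]

lemma isProbabilityMeasure_densityLaw (hp0 : ∀ x, 0 ≤ p x) (hp1 : ∫ x, p x = 1) :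
    IsProbabilityMeasure (densityLaw p) := by
  constructor
  rw [densityLaw, withDensity_apply _ MeasurableSet.univ, Measure.restrict_univ,
    ← ofReal_integral_eq_lintegral_ofReal (integrable_of_integral_eq_one hp1) (ae_of_all _ hp0),
    hp1, ENNReal.ofReal_one]

lemma cdf_densityLaw (hpmeas : Measurable p) (hp0 : ∀ x, 0 ≤ p x) (hp1 : ∫ x, p x = 1)
    (x : ℝ) : cdf (densityLaw p) x = cdfOf p x := by
  have := isProbabilityMeasure_densityLaw hp0 hp1
  rw [cdf_eq_real, ← integral_indicator_one measurableSet_Iic, integral_densityLaw hpmeas hp0,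
    cdfOf, ← integral_indicator measurableSet_Iic]
  congr 1 with u
  by_cases hu : u ∈ Iic x <;> simp [hu]

lemma kerK_eq_covKernel (hpmeas : Measurable p) (hp0 : ∀ x, 0 ≤ p x) (hp1 : ∫ x, p x = 1) :
    kerK p = covKernel (densityLaw p) := by
  ext s t
  simp only [kerK, covKernel, cdf_densityLaw hpmeas hp0 hp1]

lemma ae_densityLaw_mem {S : Set ℝ} (hpmeas : Measurable p) (hppos : ∀ x, 0 < p x ↔ x ∈ S) :
    ∀ᵐ x ∂densityLaw p, x ∈ S := by
  rw [densityLaw, ae_withDensity_iff hpmeas.ennreal_ofReal]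
  exact ae_of_all _ fun x hx => (hppos x).1 (ENNReal.ofReal_pos.1 (pos_iff_ne_zero.2 hx))

lemma div_mul_self_eq_indicator {S : Set ℝ} (hp0 : ∀ x, 0 ≤ p x)
    (hppos : ∀ x, 0 < p x ↔ x ∈ S) (f : ℝ → ℝ) (x : ℝ) :
    f x / p x * p x = S.indicator f x := by
  by_cases hx : x ∈ S
  · rw [indicator_of_mem hx, div_mul_cancel₀ _ ((hppos x).2 hx).ne']
  · rw [indicator_of_notMem hx, le_antisymm (not_lt.1 (mt (hppos x).1 hx)) (hp0 x), mul_zero]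

lemma memLp_two_densityLaw (hpmeas : Measurable p) (hp0 : ∀ x, 0 ≤ p x) {f : ℝ → ℝ}
    (hf : Measurable f) (hf2 : Integrable fun x => f x ^ 2 * p x) : MemLp f 2 (densityLaw p) :=
  (memLp_two_iff_integrable_sq hf.aestronglyMeasurable).2
    ((integrable_densityLaw_iff hpmeas hp0).2 hf2)

lemma integral_div_mul_self {S : Set ℝ} (hp0 : ∀ x, 0 ≤ p x) (hppos : ∀ x, 0 < p x ↔ x ∈ S)
    (hS : MeasurableSet S) (f : ℝ → ℝ) : ∫ x, f x / p x * p x = ∫ x in S, f x := by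
  simp_rw [div_mul_self_eq_indicator hp0 hppos, integral_indicator hS]

end Density

section DensityIdentities

variable {p : ℝ → ℝ} {S : Set ℝ}

theorem integral_mul_sub_eq_setIntegral_kerK (hS : S.OrdConnected) (hpmeas : Measurable p)
    (hp0 : ∀ x, 0 ≤ p x) (hppos : ∀ x, 0 < p x ↔ x ∈ S) (hp1 : ∫ x, p x = 1)
    {h h' g g' : ℝ → ℝ} (hh : Measurable h) (hh' : Measurable h') (hg : Measurable g)
    (hg' : Measurable g') (hh_ac : LocAC S h h') (hg_ac : LocAC S g g')
    (hh2 : Integrable fun x => h x ^ 2 * p x) (hg2 : Integrable fun x => g x ^ 2 * p x)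
    (hK : IntegrableOn (fun q : ℝ × ℝ => h' q.1 * kerK p q.1 q.2 * g' q.2) (S ×ˢ S)
      (volume.prod volume)) :
    (∫ x, h x * g x * p x) - (∫ x, h x * p x) * (∫ x, g x * p x)
      = ∫ x in S, ∫ y in S, h' x * kerK p x y * g' y := by
  have := isProbabilityMeasure_densityLaw hp0 hp1
  have hh_L2 := memLp_two_densityLaw hpmeas hp0 hh hh2
  have hg_L2 := memLp_two_densityLaw hpmeas hp0 hg hg2
  rw [IntegrableOn, ← Measure.prod_restrict, kerK_eq_covKernel hpmeas hp0 hp1] at hK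
  have key := integral_mul_sub_integral_mul_integral_eq_integral_covKernel hS
    (ae_densityLaw_mem hpmeas hppos) hh' hg' hh_ac
    (fun u hu v hv => hg_ac.setIntegral_mul_signedIndicator hS hu hv)
    (hh_L2.integrable one_le_two) (hg_L2.integrable one_le_two) (hh_L2.integrable_mul hg_L2) hK
  simp only [integral_densityLaw hpmeas hp0] at key
  rw [key, integral_prod _ hK, kerK_eq_covKernel hpmeas hp0 hp1]

theorem integral_integral_kerK_div_mul (hp0 : ∀ x, 0 ≤ p x) (hppos : ∀ x, 0 < p x ↔ x ∈ S)
    (hS : MeasurableSet S) (h' g' : ℝ → ℝ) :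
    ∫ x, ∫ y, h' x * (kerK p x y / (p x * p y)) * g' y * (p x * p y)
      = ∫ x in S, ∫ y in S, h' x * kerK p x y * g' y := by
  have : ∀ x y, h' x * (kerK p x y / (p x * p y)) * g' y * (p x * p y)
      = (h' x * kerK p x y * g' y / p y * p y) / p x * p x := fun x y => by ring
  simp_rw [this, integral_mul_const, integral_div]
  simp only [integral_div_mul_self hp0 hppos hS]

lemma integrableOn_mul_kerK (hS : MeasurableSet S) (hpmeas : Measurable p) (hp0 : ∀ x, 0 ≤ p x)
    (hppos : ∀ x, 0 < p x ↔ x ∈ S) (hp1 : ∫ x, p x = 1) {h' : ℝ → ℝ} (hh' : Measurable h')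
    {x' : ℝ} (hK : Integrable fun x => |h' x| * (kerK p x x' / p x) * p x) :
    IntegrableOn (fun s => h' s * kerK p s x') S := by
  rw [kerK_eq_covKernel hpmeas hp0 hp1] at hK ⊢
  have (x : ℝ) : |h' x| * (covKernel (densityLaw p) x x' / p x) * p x
      = S.indicator (fun s => ‖h' s * covKernel (densityLaw p) s x'‖) x := by
    rw [← div_mul_self_eq_indicator hp0 hppos, norm_mul, Real.norm_eq_abs,
      Real.norm_of_nonneg (covKernel_nonneg _ _)]
    ring
  simp_rw [this, integrable_indicator_iff hS] at hK
  exact (integrable_norm_iff (hh'.mul (measurable_covKernel.comp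
    (measurable_id.prodMk measurable_const))).aestronglyMeasurable).1 hK

theorem neg_invStein_eq_integral_kerK (hS : S.OrdConnected) (hpmeas : Measurable p)
    (hp0 : ∀ x, 0 ≤ p x) (hppos : ∀ x, 0 < p x ↔ x ∈ S) (hp1 : ∫ x, p x = 1)
    {h h' : ℝ → ℝ} (hh' : Measurable h') (hh_ac : LocAC S h h')
    (hhp : Integrable fun x => h x * p x) {x' : ℝ}
    (hK : Integrable fun x => |h' x| * (kerK p x x' / p x) * p x) :
    -invStein p h x' = ∫ x, (kerK p x x' / (p x * p x')) * h' x * p x := by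
  have := isProbabilityMeasure_densityLaw hp0 hp1
  have hK_int := integrableOn_mul_kerK hS.measurableSet hpmeas hp0 hppos hp1 hh' hK
  rw [kerK_eq_covKernel hpmeas hp0 hp1] at hK_int ⊢
  have key := setIntegral_Iic_sub_integral_eq_neg_integral_covKernel hS
    (ae_densityLaw_mem hpmeas hppos) hh' hh_ac ((integrable_densityLaw_iff hpmeas hp0).2 hhp)
    hK_int
  rw [setIntegral_densityLaw hpmeas hp0 measurableSet_Iic, integral_densityLaw hpmeas hp0] at key
  have hRHS (x : ℝ) : covKernel (densityLaw p) x x' / (p x * p x') * h' x * p x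
      = (h' x * covKernel (densityLaw p) x x' / p x') / p x * p x := by
    ring
  simp only [hRHS, integral_div_mul_self hp0 hppos hS.measurableSet, integral_div, invStein,
    setIntegral_congr_set Iio_ae_eq_Iic, key]
  ring

end DensityIdentities

theorem representation_formula_II_continuous_general
    (p : ℝ → ℝ) (S : Set ℝ) (hSconn : S.OrdConnected)
    (hpmeas : Measurable p) (hp0 : ∀ x, 0 ≤ p x)
    (hppos : ∀ x : ℝ, 0 < p x ↔ x ∈ S)
    (hp1 : ∫ x, p x = 1) :
    (∀ x x' : ℝ, 0 ≤ kerK p x x' ∧ kerK p x x' ≤ 1) ∧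
    (∀ h h' g g' : ℝ → ℝ, Measurable h → Measurable h' → Measurable g → Measurable g' →
      LocAC S h h' → LocAC S g g' →
      Integrable (fun x => h x ^ 2 * p x) → Integrable (fun x => g x ^ 2 * p x) →
      IntegrableOn (fun q : ℝ × ℝ => h' q.1 * kerK p q.1 q.2 * g' q.2) (S ×ˢ S)
        (volume.prod volume) →
      ((∫ x, h x * g x * p x) - (∫ x, h x * p x) * (∫ x, g x * p x) =
          ∫ x in S, ∫ y in S, h' x * kerK p x y * g' y ∧
        (∫ x, h x * g x * p x) - (∫ x, h x * p x) * (∫ x, g x * p x) =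
          ∫ x, ∫ y, h' x * (kerK p x y / (p x * p y)) * g' y * (p x * p y))) ∧
    (∀ h h' : ℝ → ℝ, Measurable h → Measurable h' → LocAC S h h' →
      Integrable (fun x => h x * p x) →
      ∀ x' ∈ S,
        Integrable (fun x => |h' x| * (kerK p x x' / p x) * p x) →
        -invStein p h x' = ∫ x, (kerK p x x' / (p x * p x')) * h' x * p x) := by
  refine ⟨fun x x' => ?_, fun h h' g g' hh hh' hg hg' hh_ac hg_ac hh2 hg2 hK => ?_,
    fun h h' _ hh' hh_ac hhp x' _ hK =>
      neg_invStein_eq_integral_kerK hSconn hpmeas hp0 hppos hp1 hh' hh_ac hhp hK⟩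
  · rw [kerK_eq_covKernel hpmeas hp0 hp1]
    exact ⟨covKernel_nonneg x x', covKernel_le_one x x'⟩
  · have hcov := integral_mul_sub_eq_setIntegral_kerK hSconn hpmeas hp0 hppos hp1 hh hh' hg hg'
      hh_ac hg_ac hh2 hg2 hK
    rw [integral_integral_kerK_div_mul hp0 hppos hSconn.measurableSet]
    exact ⟨hcov, hcov⟩

/-- Representation formula II, continuous case: for a probability density `p` positive
exactly on the open interval `S`, with kernel `K_p(x,x') = F(min(x,x')) − F(x)F(x')`:
(i) `0 ≤ K_p ≤ 1`; (ii) the covariance of `h(X)` and `g(X)` equals both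
`∫_S ∫_S h' K_p g'` and `E[h'(X₁) (K_p(X₁,X₂)/(p(X₁)p(X₂))) g'(X₂)]`;
(iii) `−L_p h(x') = E[(K_p(X,x')/(p(X)p(x'))) h'(X)]` for `x' ∈ S`. -/
theorem representation_formula_II_continuous
    (p : ℝ → ℝ) (S : Set ℝ) (hSopen : IsOpen S) (hSconn : S.OrdConnected)
    (hpmeas : Measurable p) (hp0 : ∀ x, 0 ≤ p x)
    (hppos : ∀ x : ℝ, 0 < p x ↔ x ∈ S)
    (hp1 : ∫ x, p x = 1) :
    (∀ x x' : ℝ, 0 ≤ kerK p x x' ∧ kerK p x x' ≤ 1) ∧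
    (∀ h h' g g' : ℝ → ℝ, Measurable h → Measurable h' → Measurable g → Measurable g' →
      LocAC S h h' → LocAC S g g' →
      Integrable (fun x => h x ^ 2 * p x) → Integrable (fun x => g x ^ 2 * p x) →
      IntegrableOn (fun q : ℝ × ℝ => h' q.1 * kerK p q.1 q.2 * g' q.2) (S ×ˢ S)
        (volume.prod volume) →
      ((∫ x, h x * g x * p x) - (∫ x, h x * p x) * (∫ x, g x * p x) =
          ∫ x in S, ∫ y in S, h' x * kerK p x y * g' y ∧
        (∫ x, h x * g x * p x) - (∫ x, h x * p x) * (∫ x, g x * p x) =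
          ∫ x, ∫ y, h' x * (kerK p x y / (p x * p y)) * g' y * (p x * p y))) ∧
    (∀ h h' : ℝ → ℝ, Measurable h → Measurable h' → LocAC S h h' →
      Integrable (fun x => h x * p x) →
      ∀ x' ∈ S,
        Integrable (fun x => |h' x| * (kerK p x x' / p x) * p x) →
        -invStein p h x' = ∫ x, (kerK p x x' / (p x * p x')) * h' x * p x) :=
  representation_formula_II_continuous_general p S hSconn hpmeas hp0 hppos hp1
end

section
/- (Representation formula III, continuous case.) Let p be a probability density on ℝ positive exactly on the open interval S = (a, b), and let X₁, X₂ be i.i.d. with density p. Then for every h with E|h(X₁)| < ∞ and every x ∈ S: −L_p h(x) = (1/p(x)) · E[(h(X₂) − h(X₁)) · 1{X₁ ≤ x ≤ X₂}]. -/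
/-!
Splitting the pair `(X₁, X₂)` at `x`, the expectation on the right factorises: writing
`P_<` / `P_≥` for the masses of `p` left / right of `x` and `H_<` / `H_≥` for the matching
integrals of `h p`, it equals `P_< H_≥ − H_< P_≥`. Since `P_< + P_≥ = 1` and
`H_< + H_≥ = E h(X)`, this is `P_< E h(X) − H_<`, which is minus the numerator of `L_p h(x)`.
-/

open MeasureTheory Set

section DensityIntegrals

variable {μ : Measure ℝ} {p h : ℝ → ℝ}

theorem integral_ite_le_le_mul (hp : Integrable p μ) (hhp : Integrable (fun u => h u * p u) μ)
    (x x₁ : ℝ) :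
    ∫ x₂, (if x₁ ≤ x ∧ x ≤ x₂ then h x₂ - h x₁ else 0) * p x₁ * p x₂ ∂μ =
      (Iic x).indicator (fun x₁ =>
        p x₁ * (∫ y in Ici x, h y * p y ∂μ) - h x₁ * p x₁ * ∫ y in Ici x, p y ∂μ) x₁ := by
  by_cases hx₁ : x₁ ≤ x
  · have hsplit : (fun x₂ => (if x₁ ≤ x ∧ x ≤ x₂ then h x₂ - h x₁ else 0) * p x₁ * p x₂) =
        (Ici x).indicator (fun x₂ => p x₁ * (h x₂ * p x₂) - h x₁ * p x₁ * p x₂) := by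
      funext x₂
      by_cases hxx₂ : x ≤ x₂
      · simp only [hx₁, hxx₂, and_self, if_true, indicator_of_mem (mem_Ici.2 hxx₂)]
        ring
      · simp [hxx₂]
    rw [hsplit, integral_indicator measurableSet_Ici,
      integral_sub (hhp.integrableOn.const_mul _) (hp.integrableOn.const_mul _),
      integral_const_mul, integral_const_mul, indicator_of_mem (mem_Iic.2 hx₁)]
  · simp [hx₁]

theorem integral_integral_ite_le_le_mul (hp : Integrable p μ)
    (hhp : Integrable (fun u => h u * p u) μ) (x : ℝ) :
    ∫ x₁, ∫ x₂, (if x₁ ≤ x ∧ x ≤ x₂ then h x₂ - h x₁ else 0) * p x₁ * p x₂ ∂μ ∂μ =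
      (∫ u in Iic x, p u ∂μ) * (∫ y in Ici x, h y * p y ∂μ) -
        (∫ u in Iic x, h u * p u ∂μ) * ∫ y in Ici x, p y ∂μ := by
  simp_rw [integral_ite_le_le_mul hp hhp x]
  rw [integral_indicator measurableSet_Iic,
    integral_sub (hp.integrableOn.mul_const _) (hhp.integrableOn.mul_const _),
    integral_mul_const, integral_mul_const]

theorem setIntegral_Ici_eq_integral_sub {f : ℝ → ℝ} (hf : Integrable f μ) (x : ℝ) :
    ∫ u in Ici x, f u ∂μ = ∫ u, f u ∂μ - ∫ u in Iio x, f u ∂μ := by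
  rw [← intervalIntegral.integral_Iio_add_Ici hf.integrableOn hf.integrableOn]
  ring

end DensityIntegrals

theorem representation_formula_III_continuous_general
    (p : ℝ → ℝ)
    (hp1 : ∫ x, p x = 1)
    (h : ℝ → ℝ)
    (hhint : Integrable (fun u => h u * p u))
    (x : ℝ) :
    -invStein p h x =
      (∫ x₁, ∫ x₂,
        (if x₁ ≤ x ∧ x ≤ x₂ then h x₂ - h x₁ else 0) * p x₁ * p x₂) / p x := by
  have hp : Integrable p := .of_integral_ne_zero (by simp [hp1])
  have hnum : ∫ u in Iio x, (h u - ∫ y, h y * p y) * p u =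
      (∫ u in Iio x, h u * p u) - (∫ y, h y * p y) * ∫ u in Iio x, p u := by
    simp_rw [sub_mul]
    rw [integral_sub hhint.integrableOn (hp.integrableOn.const_mul _), integral_const_mul]
  rw [invStein, hnum, integral_integral_ite_le_le_mul hp hhint, integral_Iic_eq_integral_Iio,
    integral_Iic_eq_integral_Iio, setIntegral_Ici_eq_integral_sub hhint,
    setIntegral_Ici_eq_integral_sub hp, hp1, ← neg_div]
  congr 1
  ring

/-- Representation formula III, continuous case: for a probability density `p`
positive exactly on the open interval `S` and `X₁, X₂` i.i.d. with density `p`,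
`−L_p h(x) = (1/p(x)) E[(h(X₂) − h(X₁)) 1{X₁ ≤ x ≤ X₂}]` for every `x ∈ S`. -/
theorem representation_formula_III_continuous
    (p : ℝ → ℝ) (S : Set ℝ) (hSopen : IsOpen S) (hSconn : S.OrdConnected)
    (hpmeas : Measurable p) (hp0 : ∀ x, 0 ≤ p x)
    (hppos : ∀ x : ℝ, 0 < p x ↔ x ∈ S)
    (hp1 : ∫ x, p x = 1)
    (h : ℝ → ℝ) (hhmeas : Measurable h)
    (hhint : Integrable (fun u => h u * p u))
    (x : ℝ) (hx : x ∈ S) :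
    -invStein p h x =
      (∫ x₁, ∫ x₂,
        (if x₁ ≤ x ∧ x ≤ x₂ then h x₂ - h x₁ else 0) * p x₁ * p x₂) / p x :=
  representation_formula_III_continuous_general p hp1 h hhint x
end

section
/- (Olkin–Shepp first-order matrix bound, continuous case.) Let p be a probability density on ℝ positive exactly on the open interval S, and let X, X₁, X₂ be i.i.d. with density p. Let h : ℝ → ℝ be locally absolutely continuous with h'(x) > 0 for a.e. x ∈ S and E|h(X)| < ∞, and set Γ₁(x) = (1/p(x)) E[(h(X₂) − h(X₁)) · 1{X₁ ≤ x ≤ X₂}] for x ∈ S. Let f, g : ℝ → ℝ be locally absolutely continuous with E[f(X)²] < ∞, E[g(X)²] < ∞ and all entries of the matrix below finite. Then the 2×2 matrix E[ (Γ₁(X)/h'(X)) · [[f'(X)², f'(X) g'(X)], [f'(X) g'(X), g'(X)²]] ] − [[Var[f(X)], Cov[f(X), g(X)]], [Cov[f(X), g(X)], Var[g(X)]]] is positive semidefinite. -/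
/-!
For `φ = a f + b g` the quadratic form of the matrix at `(a, b)` is
`E[Γ₁(X)/h'(X) φ'(X)²] − Var φ(X)`, so it suffices to bound the variance of one function.
By symmetry of `(X₁, X₂)`, `Var φ(X) = ½ E[(φ(X₂) − φ(X₁))²] ≤ E[(φ(X₂) − φ(X₁))² 1{X₁ ≤ X₂}]`.
For `x ≤ y` in `S`, the fundamental theorem of calculus and Cauchy–Schwarz with weight `h'` give
`(φ(y) − φ(x))² ≤ (h(y) − h(x)) ∫_x^y φ'²/h'`. Integrating over `(X₁, X₂)` and exchanging the order
of integration turns the right-hand side into `∫ p Γ₁ φ'²/h' = E[Γ₁(X)/h'(X) φ'(X)²]`.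
-/

open MeasureTheory Set

/-- The probability measure on `ℝ` with Lebesgue density `p`. -/
noncomputable def dens (p : ℝ → ℝ) : Measure ℝ :=
  MeasureTheory.volume.withDensity fun x => ENNReal.ofReal (p x)

/-- The first-order Stein coefficient
`Γ₁(x) = (1/p(x)) E[(h(X₂) − h(X₁)) 1{X₁ ≤ x ≤ X₂}]` (for `X₁, X₂` i.i.d. ~ `p`). -/
noncomputable def Gamma1 (p h : ℝ → ℝ) (x : ℝ) : ℝ :=
  (∫ q : ℝ × ℝ, (if q.1 ≤ x ∧ x ≤ q.2 then h q.2 - h q.1 else 0)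
    ∂((dens p).prod (dens p))) / p x

open ProbabilityTheory
open scoped ENNReal

-- Stated in `ℝ≥0∞` because `u² / w` need not be integrable.
theorem ofReal_sq_integral_le_mul_lintegral_sq_div {α : Type*} [MeasurableSpace α]
    {μ : Measure α} {u w : α → ℝ} (hu : Integrable u μ) (hw : Integrable w μ)
    (hw_pos : ∀ᵐ a ∂μ, 0 < w a) :
    ENNReal.ofReal ((∫ a, u a ∂μ) ^ 2)
      ≤ ENNReal.ofReal (∫ a, w a ∂μ) * ∫⁻ a, ENNReal.ofReal (u a ^ 2 / w a) ∂μ := by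
  have hsq : ∀ r : ℝ, 0 ≤ r → ENNReal.ofReal √r ^ (2 : ℝ) = ENNReal.ofReal r := fun r hr => by
    rw [ENNReal.ofReal_rpow_of_nonneg (Real.sqrt_nonneg r) zero_le_two, Real.rpow_two,
      Real.sq_sqrt hr]
  -- Hölder with exponents `2, 2` applied to `|u| = √(u² / w) · √w`
  have holder := ENNReal.lintegral_mul_le_Lp_mul_Lq μ Real.HolderConjugate.two_two
    (f := fun a => ENNReal.ofReal √(u a ^ 2 / w a)) (g := fun a => ENNReal.ofReal √(w a))
    (hu.aemeasurable.pow_const 2 |>.div hw.aemeasurable).sqrt.ennreal_ofReal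
    hw.aemeasurable.sqrt.ennreal_ofReal
  have habs : ∫⁻ a, ENNReal.ofReal √(u a ^ 2 / w a) * ENNReal.ofReal √(w a) ∂μ
      = ENNReal.ofReal (∫ a, |u a| ∂μ) := by
    rw [ofReal_integral_eq_lintegral_ofReal hu.abs (.of_forall fun a => abs_nonneg _)]
    refine lintegral_congr_ae (hw_pos.mono fun a ha => ?_)
    dsimp only
    rw [← ENNReal.ofReal_mul (Real.sqrt_nonneg _), ← Real.sqrt_mul
      (div_nonneg (sq_nonneg _) ha.le), div_mul_cancel₀ _ ha.ne', Real.sqrt_sq_eq_abs]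
  have hf : ∫⁻ a, ENNReal.ofReal √(u a ^ 2 / w a) ^ (2 : ℝ) ∂μ
      = ∫⁻ a, ENNReal.ofReal (u a ^ 2 / w a) ∂μ :=
    lintegral_congr_ae (hw_pos.mono fun a ha => hsq _ (div_nonneg (sq_nonneg _) ha.le))
  have hg : ∫⁻ a, ENNReal.ofReal √(w a) ^ (2 : ℝ) ∂μ = ENNReal.ofReal (∫ a, w a ∂μ) := by
    rw [ofReal_integral_eq_lintegral_ofReal hw (hw_pos.mono fun a ha => ha.le)]
    exact lintegral_congr_ae (hw_pos.mono fun a ha => hsq _ ha.le)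
  simp only [Pi.mul_apply] at holder
  rw [habs, hf, hg] at holder
  calc ENNReal.ofReal ((∫ a, u a ∂μ) ^ 2) = ENNReal.ofReal |∫ a, u a ∂μ| ^ (2 : ℝ) := by
        rw [← hsq _ (sq_nonneg _), Real.sqrt_sq_eq_abs]
    _ ≤ ENNReal.ofReal (∫ a, |u a| ∂μ) ^ (2 : ℝ) := by
        gcongr
        exact abs_integral_le_integral_abs
    _ ≤ ((∫⁻ a, ENNReal.ofReal (u a ^ 2 / w a) ∂μ) ^ (1 / 2 : ℝ)
          * ENNReal.ofReal (∫ a, w a ∂μ) ^ (1 / 2 : ℝ)) ^ (2 : ℝ) := by gcongr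
    _ = _ := by
        rw [ENNReal.mul_rpow_of_nonneg _ _ zero_le_two, ← ENNReal.rpow_mul, ← ENNReal.rpow_mul,
          mul_comm]
        norm_num

theorem integral_prod_sub_sq_eq_two_mul_variance {Ω : Type*} [MeasurableSpace Ω]
    {μ : Measure Ω} [IsProbabilityMeasure μ] {φ : Ω → ℝ} (hφ : MemLp φ 2 μ) :
    ∫ z, (φ z.2 - φ z.1) ^ 2 ∂(μ.prod μ) = 2 * Var[φ; μ] := by
  have hvar := variance_add_prod hφ.neg hφ
  have hmean : ∫ z, ((-φ) z.1 + φ z.2) ∂(μ.prod μ) = 0 := by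
    rw [integral_add ((hφ.neg.integrable one_le_two).comp_fst μ)
      ((hφ.integrable one_le_two).comp_snd μ), integral_fun_fst, integral_fun_snd]
    simp [integral_neg]
  have hZ : AEMeasurable (fun z : Ω × Ω => (-φ) z.1 + φ z.2) (μ.prod μ) :=
    ((hφ.neg.comp_fst μ).add (hφ.comp_snd μ)).aemeasurable
  rw [variance_of_integral_eq_zero hZ hmean, variance_neg] at hvar
  simp only [Pi.neg_apply, neg_add_eq_sub] at hvar
  rw [hvar]
  ring

theorem ae_prod_mem_of_ae_mem {α β : Type*} [MeasurableSpace α] [MeasurableSpace β]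
    {μ : Measure α} {ν : Measure β} {s : Set α} {t : Set β} (hs : ∀ᵐ x ∂μ, x ∈ s)
    (ht : ∀ᵐ y ∂ν, y ∈ t) : ∀ᵐ q ∂(μ.prod ν), q.1 ∈ s ∧ q.2 ∈ t :=
  (Measure.quasiMeasurePreserving_fst.ae hs).and (Measure.quasiMeasurePreserving_snd.ae ht)

theorem integral_le_two_mul_integral_ite_le {μ : Measure ℝ} [SFinite μ] {F : ℝ × ℝ → ℝ}
    (hF : Integrable F (μ.prod μ)) (hF_nonneg : ∀ z, 0 ≤ F z) (hF_swap : ∀ z, F z.swap = F z) :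
    ∫ z, F z ∂(μ.prod μ) ≤ 2 * ∫ z, (if z.1 ≤ z.2 then F z else 0) ∂(μ.prod μ) := by
  set G : ℝ × ℝ → ℝ := fun z => if z.1 ≤ z.2 then F z else 0
  have hG : Integrable G (μ.prod μ) :=
    hF.indicator (measurableSet_le measurable_fst measurable_snd)
  have hG_swap : Integrable (fun z => G z.swap) (μ.prod μ) := hG.swap
  calc ∫ z, F z ∂(μ.prod μ) ≤ ∫ z, (G z + G z.swap) ∂(μ.prod μ) := by
        refine integral_mono hF (hG.add hG_swap) fun z => ?_
        rcases le_or_gt z.1 z.2 with h | h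
        · simpa [G, h, hF_swap] using ite_nonneg (hF_nonneg z) le_rfl
        · simp [G, h.not_ge, h.le, hF_swap]
    _ = 2 * ∫ z, G z ∂(μ.prod μ) := by
        rw [integral_add hG hG_swap, integral_prod_swap G]
        ring

theorem variance_le_integral_ite_sq_sub {μ : Measure ℝ} [IsProbabilityMeasure μ] {φ : ℝ → ℝ}
    (hφ : MemLp φ 2 μ) :
    Var[φ; μ] ≤ ∫ z, (if z.1 ≤ z.2 then (φ z.2 - φ z.1) ^ 2 else 0) ∂(μ.prod μ) := by
  have hF : Integrable (fun z : ℝ × ℝ => (φ z.2 - φ z.1) ^ 2) (μ.prod μ) :=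
    ((hφ.comp_snd μ).sub (hφ.comp_fst μ)).integrable_sq
  have := integral_le_two_mul_integral_ite_le hF (fun z => sq_nonneg _)
    (fun z => by simp only [Prod.fst_swap, Prod.snd_swap]; ring)
  rw [integral_prod_sub_sq_eq_two_mul_variance hφ] at this
  linarith

theorem measurableSet_straddle (x : ℝ) : MeasurableSet {q : ℝ × ℝ | q.1 ≤ x ∧ x ≤ q.2} :=
  (measurableSet_le measurable_fst measurable_const).inter
    (measurableSet_le measurable_const measurable_snd)

theorem lintegral_mul_setLIntegral_Icc {ν : Measure (ℝ × ℝ)} [SFinite ν] {F : ℝ × ℝ → ℝ≥0∞}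
    {ψ : ℝ → ℝ≥0∞} (hF : Measurable F) (hψ : Measurable ψ) :
    ∫⁻ z, F z * (∫⁻ t in Icc z.1 z.2, ψ t) ∂ν
      = ∫⁻ t, (∫⁻ z, if z.1 ≤ t ∧ t ≤ z.2 then F z else 0 ∂ν) * ψ t := by
  have hIcc : ∀ z : ℝ × ℝ, F z * ∫⁻ t in Icc z.1 z.2, ψ t
      = ∫⁻ t, (if z.1 ≤ t ∧ t ≤ z.2 then F z else 0) * ψ t := fun z => by
    rw [← lintegral_const_mul _ hψ, ← lintegral_indicator measurableSet_Icc]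
    congr 1 with t
    by_cases ht : z.1 ≤ t ∧ t ≤ z.2 <;> simp [indicator, ht]
  simp_rw [hIcc]
  rw [lintegral_lintegral_swap]
  · congr 1 with t
    exact lintegral_mul_const _ (hF.ite (measurableSet_straddle t) measurable_const)
  · refine (Measurable.mul ?_ (hψ.comp measurable_snd)).aemeasurable
    exact (hF.comp measurable_fst).ite ((measurableSet_le measurable_fst.fst measurable_snd).inter
      (measurableSet_le measurable_snd measurable_fst.snd)) measurable_const

theorem mul_const_mul_add_const_mul_sq {Ω : Type*} (w u v : Ω → ℝ) (a b : ℝ) :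
    (fun x => w x * (a * u x + b * v x) ^ 2)
      = fun x => a ^ 2 * (w x * u x ^ 2) + 2 * a * b * (w x * (u x * v x))
        + b ^ 2 * (w x * v x ^ 2) := by
  ext x
  ring

section LinearCombination

variable {Ω : Type*} [MeasurableSpace Ω] {μ : Measure Ω}

theorem variance_const_mul_add_const_mul [IsProbabilityMeasure μ] {f g : Ω → ℝ}
    (hf : MemLp f 2 μ) (hg : MemLp g 2 μ) (a b : ℝ) :
    Var[fun x => a * f x + b * g x; μ]
      = ((∫ x, f x ^ 2 ∂μ) - (∫ x, f x ∂μ) ^ 2) * a ^ 2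
        + 2 * ((∫ x, f x * g x ∂μ) - (∫ x, f x ∂μ) * (∫ x, g x ∂μ)) * a * b
        + ((∫ x, g x ^ 2 ∂μ) - (∫ x, g x ∂μ) ^ 2) * b ^ 2 := by
  rw [variance_fun_add (hf.const_mul a) (hg.const_mul b), variance_const_mul, variance_const_mul,
    covariance_const_mul_left, covariance_const_mul_right, variance_eq_sub hf, variance_eq_sub hg,
    covariance_eq_sub hf hg]
  simp only [Pi.pow_apply, Pi.mul_apply]
  ring

variable {w u v : Ω → ℝ} (huu : Integrable (fun x => w x * u x ^ 2) μ)
  (huv : Integrable (fun x => w x * (u x * v x)) μ) (hvv : Integrable (fun x => w x * v x ^ 2) μ)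
include huu huv hvv

theorem integrable_mul_const_mul_add_const_mul_sq (a b : ℝ) :
    Integrable (fun x => w x * (a * u x + b * v x) ^ 2) μ := by
  rw [mul_const_mul_add_const_mul_sq]
  exact ((huu.const_mul _).add (huv.const_mul _)).add (hvv.const_mul _)

theorem integral_mul_const_mul_add_const_mul_sq (a b : ℝ) :
    ∫ x, w x * (a * u x + b * v x) ^ 2 ∂μ
      = (∫ x, w x * u x ^ 2 ∂μ) * a ^ 2 + 2 * (∫ x, w x * (u x * v x) ∂μ) * a * b
        + (∫ x, w x * v x ^ 2 ∂μ) * b ^ 2 := by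
  have hu2 : Integrable (fun x => a ^ 2 * (w x * u x ^ 2)) μ := huu.const_mul _
  have hu2v : Integrable (fun x => a ^ 2 * (w x * u x ^ 2) + 2 * a * b * (w x * (u x * v x))) μ :=
    hu2.add (huv.const_mul _)
  rw [mul_const_mul_add_const_mul_sq, integral_add hu2v (hvv.const_mul _),
    integral_add hu2 (huv.const_mul _), integral_const_mul, integral_const_mul, integral_const_mul]
  ring

end LinearCombination

theorem Matrix.posSemidef_sub_of_quadratic_le {a b c a' b' c' : ℝ}
    (h : ∀ x y : ℝ, a' * x ^ 2 + 2 * b' * x * y + c' * y ^ 2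
      ≤ a * x ^ 2 + 2 * b * x * y + c * y ^ 2) :
    (!![a, b; b, c] - !![a', b'; b', c']).PosSemidef := by
  rw [Matrix.posSemidef_iff_dotProduct_mulVec]
  refine ⟨?_, fun v => ?_⟩
  · ext i j
    fin_cases i <;> fin_cases j <;> simp
  · have := h (v 0) (v 1)
    simp only [dotProduct, Pi.star_apply, star_trivial, Matrix.mulVec, Matrix.sub_apply,
      Matrix.of_apply, Matrix.cons_val', Matrix.cons_val_fin_one, Fin.sum_univ_two,
      Matrix.cons_val_zero, Matrix.cons_val_one]
    nlinarith

namespace LocAC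

variable {S : Set ℝ} {f f' g g' : ℝ → ℝ}

theorem const_mul (hf : LocAC S f f') (c : ℝ) :
    LocAC S (fun x => c * f x) (fun x => c * f' x) := fun x hx y hy =>
  ⟨(hf x hx y hy).1.const_mul c, by
    rw [intervalIntegral.integral_const_mul, ← (hf x hx y hy).2, mul_sub]⟩

theorem add (hf : LocAC S f f') (hg : LocAC S g g') :
    LocAC S (fun x => f x + g x) (fun x => f' x + g' x) := fun x hx y hy =>
  ⟨(hf x hx y hy).1.add (hg x hx y hy).1, by
    rw [intervalIntegral.integral_add (hf x hx y hy).1 (hg x hx y hy).1, ← (hf x hx y hy).2,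
      ← (hg x hx y hy).2]
    ring⟩

theorem monotoneOn (hS : S.OrdConnected) (hf : LocAC S f f')
    (hf' : ∀ᵐ x ∂(volume.restrict S), 0 < f' x) : MonotoneOn f S := fun x hx y hy hxy => by
  rw [← sub_nonneg, (hf x hx y hy).2]
  refine intervalIntegral.integral_nonneg_of_ae_restrict hxy ?_
  filter_upwards [ae_restrict_of_ae_restrict_of_subset (hS.out hx hy) hf'] with t ht using ht.le

theorem ofReal_sq_sub_le (hS : S.OrdConnected) (hf : LocAC S f f') (hg : LocAC S g g')
    (hg' : ∀ᵐ x ∂(volume.restrict S), 0 < g' x) {x y : ℝ} (hx : x ∈ S) (hy : y ∈ S)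
    (hxy : x ≤ y) :
    ENNReal.ofReal ((f y - f x) ^ 2)
      ≤ ENNReal.ofReal (g y - g x) * ∫⁻ t in Icc x y, ENNReal.ofReal (f' t ^ 2 / g' t) := by
  rw [(hf x hx y hy).2, (hg x hx y hy).2, intervalIntegral.integral_of_le hxy,
    intervalIntegral.integral_of_le hxy]
  calc _ ≤ _ := ofReal_sq_integral_le_mul_lintegral_sq_div (hf x hx y hy).1.1 (hg x hx y hy).1.1
        (ae_restrict_of_ae_restrict_of_subset (Ioc_subset_Icc_self.trans (hS.out hx hy)) hg')
    _ ≤ _ := by gcongr; exact Ioc_subset_Icc_self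

end LocAC

noncomputable def straddleIncrement (μ : Measure ℝ) (h : ℝ → ℝ) (x : ℝ) : ℝ :=
  ∫ q : ℝ × ℝ, (if q.1 ≤ x ∧ x ≤ q.2 then h q.2 - h q.1 else 0) ∂(μ.prod μ)

theorem gamma1_eq_straddleIncrement_div (p h : ℝ → ℝ) (x : ℝ) :
    Gamma1 p h x = straddleIncrement (dens p) h x / p x := rfl

section straddleIncrement

variable {μ : Measure ℝ} {h : ℝ → ℝ} {S : Set ℝ}

theorem measurable_straddleIncrement [SFinite μ] (hh : Measurable h) :
    Measurable (straddleIncrement μ h) := by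
  have : StronglyMeasurable fun q : ℝ × (ℝ × ℝ) =>
      if q.2.1 ≤ q.1 ∧ q.1 ≤ q.2.2 then h q.2.2 - h q.2.1 else 0 :=
    ((hh.comp measurable_snd.snd).sub (hh.comp measurable_snd.fst)).ite
      ((measurableSet_le measurable_snd.fst measurable_fst).inter
        (measurableSet_le measurable_fst measurable_snd.snd)) measurable_const
      |>.stronglyMeasurable
  exact this.integral_prod_right'.measurable

theorem straddleIncrement_eq_zero_of_notMem (hS : S.OrdConnected) (hμS : ∀ᵐ x ∂μ, x ∈ S)
    {x : ℝ} (hx : x ∉ S) : straddleIncrement μ h x = 0 := by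
  refine integral_eq_zero_of_ae ((ae_prod_mem_of_ae_mem hμS hμS).mono fun q hq => ?_)
  have : ¬(q.1 ≤ x ∧ x ≤ q.2) := fun hqx => hx (hS.out hq.1 hq.2 hqx)
  simp [this]

theorem straddle_integrand_nonneg (hh : MonotoneOn h S) (hμS : ∀ᵐ x ∂μ, x ∈ S) (x : ℝ) :
    0 ≤ᵐ[μ.prod μ] fun q => if q.1 ≤ x ∧ x ≤ q.2 then h q.2 - h q.1 else 0 :=
  (ae_prod_mem_of_ae_mem hμS hμS).mono fun q hq => by
    dsimp only [Pi.zero_apply]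
    split_ifs with hqx
    · exact sub_nonneg.2 (hh hq.1 hq.2 (hqx.1.trans hqx.2))
    · exact le_rfl

theorem straddleIncrement_nonneg (hh : MonotoneOn h S) (hμS : ∀ᵐ x ∂μ, x ∈ S) (x : ℝ) :
    0 ≤ straddleIncrement μ h x :=
  integral_nonneg_of_ae (straddle_integrand_nonneg hh hμS x)

theorem ofReal_straddleIncrement [IsFiniteMeasure μ] (hint : Integrable h μ)
    (hmono : MonotoneOn h S) (hμS : ∀ᵐ x ∂μ, x ∈ S) (x : ℝ) :
    ENNReal.ofReal (straddleIncrement μ h x)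
      = ∫⁻ q, (if q.1 ≤ x ∧ x ≤ q.2 then ENNReal.ofReal (h q.2 - h q.1) else 0) ∂(μ.prod μ) := by
  have hdiff : Integrable (fun q : ℝ × ℝ => h q.2 - h q.1) (μ.prod μ) :=
    (hint.comp_snd μ).sub (hint.comp_fst μ)
  rw [straddleIncrement,
    ofReal_integral_eq_lintegral_ofReal _ (straddle_integrand_nonneg hmono hμS x)]
  · congr 1 with q
    split_ifs <;> simp
  · refine (hdiff.indicator (measurableSet_straddle x)).congr (.of_forall fun q => ?_)
    simp only [indicator, mem_ofPred_eq]

end straddleIncrement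

section dens

variable {p : ℝ → ℝ}

instance : SFinite (dens p) := by
  unfold dens
  infer_instance

theorem isProbabilityMeasure_dens (hp0 : ∀ x, 0 ≤ p x) (hp1 : ∫ x, p x = 1) :
    IsProbabilityMeasure (dens p) := by
  have hp : Integrable p := by
    by_contra hp
    simp [integral_undef hp] at hp1
  constructor
  rw [dens, withDensity_apply _ MeasurableSet.univ, Measure.restrict_univ,
    ← ofReal_integral_eq_lintegral_ofReal hp (.of_forall hp0), hp1, ENNReal.ofReal_one]

theorem ae_dens_pos (hp : Measurable p) : ∀ᵐ x ∂(dens p), 0 < p x :=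
  (ae_withDensity_iff hp.ennreal_ofReal).2 <|
    .of_forall fun _ hx => ENNReal.ofReal_pos.1 (pos_iff_ne_zero.2 hx)

theorem lintegral_ofReal_straddleIncrement_mul {h : ℝ → ℝ} {S : Set ℝ} {ψ : ℝ → ℝ≥0∞}
    (hp : Measurable p) (hp0 : ∀ x, 0 ≤ p x) (hpS : ∀ x, 0 < p x ↔ x ∈ S) (hS : S.OrdConnected)
    (hh : Measurable h) (hψ : Measurable ψ) :
    ∫⁻ t, ENNReal.ofReal (straddleIncrement (dens p) h t) * ψ t
      = ∫⁻ t, ENNReal.ofReal (Gamma1 p h t) * ψ t ∂(dens p) := by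
  have hmeas : Measurable fun t => ENNReal.ofReal (Gamma1 p h t) * ψ t :=
    ((measurable_straddleIncrement hh).div hp).ennreal_ofReal.mul hψ
  refine Eq.trans ?_ (lintegral_withDensity_eq_lintegral_mul _ hp.ennreal_ofReal hmeas).symm
  congr 1 with t
  rcases (hp0 t).lt_or_eq with ht | ht
  · rw [Pi.mul_apply, ← mul_assoc, ← ENNReal.ofReal_mul (hp0 t), mul_comm (p t),
      gamma1_eq_straddleIncrement_div, div_mul_cancel₀ _ ht.ne']
  · have hμS : ∀ᵐ x ∂(dens p), x ∈ S := (ae_dens_pos hp).mono fun x hx => (hpS x).1 hx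
    have htS : t ∉ S := fun htS => ((hpS t).2 htS).ne' ht.symm
    simp [straddleIncrement_eq_zero_of_notMem hS hμS htS, ← ht]

end dens

theorem lintegral_ite_sq_sub_le_lintegral_straddleIncrement_mul {μ : Measure ℝ}
    [IsFiniteMeasure μ] {S : Set ℝ} {h h' φ φ' : ℝ → ℝ} (hS : S.OrdConnected)
    (hμS : ∀ᵐ x ∂μ, x ∈ S) (hh : Measurable h) (hh' : Measurable h') (hACh : LocAC S h h')
    (hh'_pos : ∀ᵐ x ∂(volume.restrict S), 0 < h' x) (hh_int : Integrable h μ)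
    (hφ' : Measurable φ') (hACφ : LocAC S φ φ') :
    ∫⁻ z, ENNReal.ofReal (if z.1 ≤ z.2 then (φ z.2 - φ z.1) ^ 2 else 0) ∂(μ.prod μ)
      ≤ ∫⁻ t, ENNReal.ofReal (straddleIncrement μ h t) * ENNReal.ofReal (φ' t ^ 2 / h' t) := by
  have hincr : Measurable fun z : ℝ × ℝ => ENNReal.ofReal (h z.2 - h z.1) :=
    ((hh.comp measurable_snd).sub (hh.comp measurable_fst)).ennreal_ofReal
  have hψ : Measurable fun t => ENNReal.ofReal (φ' t ^ 2 / h' t) :=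
    ((hφ'.pow_const 2).div hh').ennreal_ofReal
  calc _ ≤ ∫⁻ z, ENNReal.ofReal (h z.2 - h z.1)
          * (∫⁻ t in Icc z.1 z.2, ENNReal.ofReal (φ' t ^ 2 / h' t)) ∂(μ.prod μ) := by
        refine lintegral_mono_ae ((ae_prod_mem_of_ae_mem hμS hμS).mono fun z hz => ?_)
        split_ifs with hz12
        · exact hACφ.ofReal_sq_sub_le hS hACh hh'_pos hz.1 hz.2 hz12
        · simp
    _ = _ := by
        rw [lintegral_mul_setLIntegral_Icc hincr hψ]
        simp_rw [ofReal_straddleIncrement hh_int (hACh.monotoneOn hS hh'_pos) hμS]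

theorem variance_le_integral_gamma1_div_mul_sq {p h h' φ φ' : ℝ → ℝ} {S : Set ℝ}
    (hS : S.OrdConnected) (hp : Measurable p) (hp0 : ∀ x, 0 ≤ p x)
    (hpS : ∀ x, 0 < p x ↔ x ∈ S) (hp1 : ∫ x, p x = 1)
    (hh : Measurable h) (hh' : Measurable h') (hACh : LocAC S h h')
    (hh'_pos : ∀ᵐ x ∂(volume.restrict S), 0 < h' x) (hh_int : Integrable h (dens p))
    (hφ : MemLp φ 2 (dens p)) (hφ' : Measurable φ') (hACφ : LocAC S φ φ')
    (hE : Integrable (fun x => Gamma1 p h x / h' x * φ' x ^ 2) (dens p)) :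
    Var[φ; dens p] ≤ ∫ x, Gamma1 p h x / h' x * φ' x ^ 2 ∂(dens p) := by
  have := isProbabilityMeasure_dens hp0 hp1
  have hμS : ∀ᵐ x ∂(dens p), x ∈ S := (ae_dens_pos hp).mono fun x hx => (hpS x).1 hx
  have hΓ : ∀ x, 0 ≤ Gamma1 p h x := fun x =>
    div_nonneg (straddleIncrement_nonneg (hACh.monotoneOn hS hh'_pos) hμS x) (hp0 x)
  have hh'_pos_μ : ∀ᵐ x ∂(dens p), 0 < h' x := by
    have := (ae_restrict_iff' hS.measurableSet).1 hh'_pos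
    filter_upwards [(withDensity_absolutelyContinuous _ _).ae_le this, hμS] with x hx hxS
    exact hx hxS
  have hE_nonneg : ∀ᵐ x ∂(dens p), 0 ≤ Gamma1 p h x / h' x * φ' x ^ 2 :=
    hh'_pos_μ.mono fun x hx => by have := hΓ x; positivity
  have hF : Integrable (fun z => if z.1 ≤ z.2 then (φ z.2 - φ z.1) ^ 2 else 0)
      ((dens p).prod (dens p)) :=
    ((hφ.comp_snd _).sub (hφ.comp_fst _)).integrable_sq.indicator
      (measurableSet_le measurable_fst measurable_snd)
  refine (variance_le_integral_ite_sq_sub hφ).trans <|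
    (ENNReal.ofReal_le_ofReal_iff (integral_nonneg_of_ae hE_nonneg)).1 ?_
  calc _ = ∫⁻ z, ENNReal.ofReal (if z.1 ≤ z.2 then (φ z.2 - φ z.1) ^ 2 else 0)
          ∂((dens p).prod (dens p)) :=
        ofReal_integral_eq_lintegral_ofReal hF
          (.of_forall fun z => by dsimp only; split_ifs <;> positivity)
    _ ≤ ∫⁻ t, ENNReal.ofReal (straddleIncrement (dens p) h t)
          * ENNReal.ofReal (φ' t ^ 2 / h' t) :=
        lintegral_ite_sq_sub_le_lintegral_straddleIncrement_mul hS hμS hh hh' hACh hh'_pos hh_int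
          hφ' hACφ
    _ = ∫⁻ x, ENNReal.ofReal (Gamma1 p h x) * ENNReal.ofReal (φ' x ^ 2 / h' x) ∂(dens p) :=
        lintegral_ofReal_straddleIncrement_mul hp hp0 hpS hS hh
          ((hφ'.pow_const 2).div hh').ennreal_ofReal
    _ = ∫⁻ x, ENNReal.ofReal (Gamma1 p h x / h' x * φ' x ^ 2) ∂(dens p) := by
        congr 1 with x
        rw [← ENNReal.ofReal_mul (hΓ x), mul_div_assoc', div_mul_eq_mul_div]
    _ = _ := (ofReal_integral_eq_lintegral_ofReal hE hE_nonneg).symm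

theorem olkin_shepp_first_order_continuous_general
    (p : ℝ → ℝ) (S : Set ℝ) (hSconn : S.OrdConnected)
    (hpmeas : Measurable p) (hp0 : ∀ x, 0 ≤ p x)
    (hppos : ∀ x : ℝ, 0 < p x ↔ x ∈ S)
    (hp1 : ∫ x, p x = 1)
    (h h' : ℝ → ℝ) (hhmeas : Measurable h) (hh'meas : Measurable h')
    (hACh : LocAC S h h')
    (hh'pos : ∀ᵐ x ∂(volume.restrict S), 0 < h' x)
    (hhint : Integrable h (dens p))
    (f f' g g' : ℝ → ℝ)
    (hfmeas : Measurable f) (hf'meas : Measurable f')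
    (hgmeas : Measurable g) (hg'meas : Measurable g')
    (hACf : LocAC S f f') (hACg : LocAC S g g')
    (hf2 : Integrable (fun x => f x ^ 2) (dens p))
    (hg2 : Integrable (fun x => g x ^ 2) (dens p))
    (hE11 : Integrable (fun x => Gamma1 p h x / h' x * (f' x ^ 2)) (dens p))
    (hE12 : Integrable (fun x => Gamma1 p h x / h' x * (f' x * g' x)) (dens p))
    (hE22 : Integrable (fun x => Gamma1 p h x / h' x * (g' x ^ 2)) (dens p)) :
    ((!![∫ x, Gamma1 p h x / h' x * (f' x ^ 2) ∂(dens p),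
           ∫ x, Gamma1 p h x / h' x * (f' x * g' x) ∂(dens p);
         ∫ x, Gamma1 p h x / h' x * (f' x * g' x) ∂(dens p),
           ∫ x, Gamma1 p h x / h' x * (g' x ^ 2) ∂(dens p)] : Matrix (Fin 2) (Fin 2) ℝ) -
      (!![(∫ x, f x ^ 2 ∂(dens p)) - (∫ x, f x ∂(dens p)) ^ 2,
            (∫ x, f x * g x ∂(dens p)) - (∫ x, f x ∂(dens p)) * (∫ x, g x ∂(dens p));
          (∫ x, f x * g x ∂(dens p)) - (∫ x, f x ∂(dens p)) * (∫ x, g x ∂(dens p)),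
            (∫ x, g x ^ 2 ∂(dens p)) - (∫ x, g x ∂(dens p)) ^ 2] :
        Matrix (Fin 2) (Fin 2) ℝ)).PosSemidef := by
  have := isProbabilityMeasure_dens hp0 hp1
  have hf := (memLp_two_iff_integrable_sq hfmeas.aestronglyMeasurable).2 hf2
  have hg := (memLp_two_iff_integrable_sq hgmeas.aestronglyMeasurable).2 hg2
  refine Matrix.posSemidef_sub_of_quadratic_le fun a b => ?_
  have hbound := variance_le_integral_gamma1_div_mul_sq (φ := fun x => a * f x + b * g x)
    (φ' := fun x => a * f' x + b * g' x) hSconn hpmeas hp0 hppos hp1 hhmeas hh'meas hACh hh'pos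
    hhint ((hf.const_mul a).add (hg.const_mul b)) ((hf'meas.const_mul a).add (hg'meas.const_mul b))
    ((hACf.const_mul a).add (hACg.const_mul b))
    (integrable_mul_const_mul_add_const_mul_sq hE11 hE12 hE22 a b)
  rwa [variance_const_mul_add_const_mul hf hg,
    integral_mul_const_mul_add_const_mul_sq hE11 hE12 hE22] at hbound

/-- Olkin–Shepp first-order matrix bound, continuous case: the matrix
`E[(Γ₁(X)/h'(X)) [[f'², f'g'],[f'g', g'²]]] − [[Var f, Cov(f,g)],[Cov(f,g), Var g]]`
is positive semidefinite. -/
theorem olkin_shepp_first_order_continuous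
    (p : ℝ → ℝ) (S : Set ℝ) (hSopen : IsOpen S) (hSconn : S.OrdConnected)
    (hpmeas : Measurable p) (hp0 : ∀ x, 0 ≤ p x)
    (hppos : ∀ x : ℝ, 0 < p x ↔ x ∈ S)
    (hp1 : ∫ x, p x = 1)
    (h h' : ℝ → ℝ) (hhmeas : Measurable h) (hh'meas : Measurable h')
    (hACh : LocAC S h h')
    (hh'pos : ∀ᵐ x ∂(volume.restrict S), 0 < h' x)
    (hhint : Integrable h (dens p))
    (f f' g g' : ℝ → ℝ)
    (hfmeas : Measurable f) (hf'meas : Measurable f')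
    (hgmeas : Measurable g) (hg'meas : Measurable g')
    (hACf : LocAC S f f') (hACg : LocAC S g g')
    (hf2 : Integrable (fun x => f x ^ 2) (dens p))
    (hg2 : Integrable (fun x => g x ^ 2) (dens p))
    (hE11 : Integrable (fun x => Gamma1 p h x / h' x * (f' x ^ 2)) (dens p))
    (hE12 : Integrable (fun x => Gamma1 p h x / h' x * (f' x * g' x)) (dens p))
    (hE22 : Integrable (fun x => Gamma1 p h x / h' x * (g' x ^ 2)) (dens p)) :
    ((!![∫ x, Gamma1 p h x / h' x * (f' x ^ 2) ∂(dens p),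
           ∫ x, Gamma1 p h x / h' x * (f' x * g' x) ∂(dens p);
         ∫ x, Gamma1 p h x / h' x * (f' x * g' x) ∂(dens p),
           ∫ x, Gamma1 p h x / h' x * (g' x ^ 2) ∂(dens p)] : Matrix (Fin 2) (Fin 2) ℝ) -
      (!![(∫ x, f x ^ 2 ∂(dens p)) - (∫ x, f x ∂(dens p)) ^ 2,
            (∫ x, f x * g x ∂(dens p)) - (∫ x, f x ∂(dens p)) * (∫ x, g x ∂(dens p));
          (∫ x, f x * g x ∂(dens p)) - (∫ x, f x ∂(dens p)) * (∫ x, g x ∂(dens p)),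
            (∫ x, g x ^ 2 ∂(dens p)) - (∫ x, g x ∂(dens p)) ^ 2] :
        Matrix (Fin 2) (Fin 2) ℝ)).PosSemidef :=
  olkin_shepp_first_order_continuous_general p S hSconn hpmeas hp0 hppos hp1 h h' hhmeas hh'meas
    hACh hh'pos hhint f f' g g' hfmeas hf'meas hgmeas hg'meas hACf hACg hf2 hg2 hE11 hE12 hE22
end

section
/- (Properties of the inverse Stein operator, continuous case.) Let p be a probability density on ℝ positive exactly on the open interval S = (a, b) with cumulative distribution function F, and let X have density p. Then: (i) if h : ℝ → ℝ with E|h(X)| < ∞ is monotone nondecreasing, then L_p h(x) ≤ 0 for every x ∈ S (and L_p h(x) ≥ 0 for every x ∈ S if h is nonincreasing); (ii) if h is bounded with sup-norm ‖h‖_∞, then |L_p h(x)| ≤ 2 ‖h‖_∞ · F(x)(1 − F(x))/p(x) for every x ∈ S. -/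
open MeasureTheory Set

section aux

variable (p h : ℝ → ℝ)

lemma invStein_decomp (hpInt : Integrable p)
    (hhint : Integrable (fun x => h x * p x)) (x : ℝ) :
    (∫ u in Iio x, (h u - ∫ y, h y * p y) * p u)
      = (∫ u in Iio x, h u * p u) - (∫ y, h y * p y) * ∫ u in Iio x, p u := by
  have : (∫ u in Iio x, (h u - ∫ y, h y * p y) * p u)
      = ∫ u in Iio x, (h u * p u - (∫ y, h y * p y) * p u) := by
    congr 1; ext u; ring
  rw [this, integral_sub (hhint.integrableOn)
    ((hpInt.integrableOn).const_mul _), integral_const_mul]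

lemma split_p (hpInt : Integrable p) (hp1 : ∫ x, p x = 1) (x : ℝ) :
    (∫ u in Ici x, p u) = 1 - ∫ u in Iio x, p u := by
  have := intervalIntegral.integral_Iio_add_Ici (μ := volume) (b := x)
    hpInt.integrableOn hpInt.integrableOn
  rw [hp1] at this; linarith

lemma split_hp (hhint : Integrable (fun x => h x * p x)) (x : ℝ) :
    (∫ y, h y * p y) = (∫ u in Iio x, h u * p u) + ∫ u in Ici x, h u * p u :=
  (intervalIntegral.integral_Iio_add_Ici (μ := volume) (b := x)
    hhint.integrableOn hhint.integrableOn).symm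

lemma F_nonneg (hp0 : ∀ x, 0 ≤ p x) (x : ℝ) : 0 ≤ ∫ u in Iio x, p u :=
  setIntegral_nonneg measurableSet_Iio fun u _ => hp0 u

lemma F_le_one (hp0 : ∀ x, 0 ≤ p x) (hpInt : Integrable p)
    (hp1 : ∫ x, p x = 1) (x : ℝ) : (∫ u in Iio x, p u) ≤ 1 := by
  rw [← hp1]
  exact setIntegral_le_integral hpInt (Filter.Eventually.of_forall hp0)

lemma key_mono (hp0 : ∀ x, 0 ≤ p x) (hpInt : Integrable p)
    (hp1 : ∫ x, p x = 1) (hhint : Integrable (fun x => h x * p x))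
    (hmono : Monotone h) (x : ℝ) (hpx : 0 < p x) : invStein p h x ≤ 0 := by
  unfold invStein
  apply div_nonpos_of_nonpos_of_nonneg _ hpx.le
  rw [invStein_decomp p h hpInt hhint, split_hp p h hhint x]
  set F := ∫ u in Iio x, p u with hF
  set A := ∫ u in Iio x, h u * p u with hA
  set B := ∫ u in Ici x, h u * p u with hB
  have hF0 : 0 ≤ F := F_nonneg p hp0 x
  have hF1 : F ≤ 1 := F_le_one p hp0 hpInt hp1 x
  have hAle : A ≤ h x * F := by
    rw [hF, ← integral_const_mul]
    apply setIntegral_mono_on hhint.integrableOn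
      ((hpInt.integrableOn).const_mul _) measurableSet_Iio
    intro u hu
    exact mul_le_mul_of_nonneg_right (hmono (le_of_lt hu)) (hp0 u)
  have hBge : h x * (1 - F) ≤ B := by
    rw [hB, ← split_p p hpInt hp1 x, ← integral_const_mul]
    apply setIntegral_mono_on ((hpInt.integrableOn).const_mul _)
      hhint.integrableOn measurableSet_Ici
    intro u hu
    exact mul_le_mul_of_nonneg_right (hmono hu) (hp0 u)
  nlinarith [mul_le_mul_of_nonneg_right hAle (sub_nonneg.mpr hF1),
    mul_le_mul_of_nonneg_right hBge hF0]

lemma invStein_neg (x : ℝ) :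
    invStein p (fun u => - h u) x = - invStein p h x := by
  unfold invStein
  rw [← neg_div]
  congr 1
  rw [← integral_neg]
  apply integral_congr_ae
  filter_upwards with u
  have : (∫ y, -h y * p y) = - ∫ y, h y * p y := by
    rw [← integral_neg]; congr 1; ext y; ring
  rw [this]; ring

end aux

/-- Properties of the inverse Stein operator, continuous case:
(i) if `h` is monotone nondecreasing then `L_p h ≤ 0` on `S` (and `L_p h ≥ 0` on `S`
if `h` is nonincreasing); (ii) if `|h| ≤ C` everywhere then
`|L_p h(x)| ≤ 2C·F(x)(1 − F(x))/p(x)` on `S`. -/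
theorem inverse_stein_operator_properties
    (p : ℝ → ℝ) (S : Set ℝ) (hSopen : IsOpen S) (hSconn : S.OrdConnected)
    (hpmeas : Measurable p) (hp0 : ∀ x, 0 ≤ p x)
    (hppos : ∀ x : ℝ, 0 < p x ↔ x ∈ S)
    (hp1 : ∫ x, p x = 1)
    (h : ℝ → ℝ) (hhmeas : Measurable h)
    (hhint : Integrable (fun x => h x * p x)) :
    (Monotone h → ∀ x ∈ S, invStein p h x ≤ 0) ∧
    (Antitone h → ∀ x ∈ S, 0 ≤ invStein p h x) ∧
    (∀ C : ℝ, (∀ x, |h x| ≤ C) → ∀ x ∈ S,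
      |invStein p h x| ≤ 2 * C * (cdfOf p x * (1 - cdfOf p x)) / p x) := by
  have hpInt : Integrable p := by
    by_contra hc
    rw [integral_undef hc] at hp1
    norm_num at hp1
  have hcdf : ∀ x : ℝ, cdfOf p x = ∫ u in Iio x, p u := by
    intro x
    exact (setIntegral_congr_set Iio_ae_eq_Iic).symm
  refine ⟨fun hmono x hx => key_mono p h hp0 hpInt hp1 hhint hmono x
      ((hppos x).mpr hx), fun hanti x hx => ?_, fun C hC x hx => ?_⟩
  · have := key_mono p (fun u => - h u) hp0 hpInt hp1
      (by
        have : (fun x => -h x * p x) = fun x => -(h x * p x) := by ext u; ring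
        rw [this]; exact hhint.neg) (fun a b hab => neg_le_neg (hanti hab))
      x ((hppos x).mpr hx)
    rw [invStein_neg p h x] at this
    linarith
  · have hpx : 0 < p x := (hppos x).mpr hx
    have hC0 : 0 ≤ C := le_trans (abs_nonneg _) (hC 0)
    unfold invStein
    rw [abs_div, abs_of_pos hpx, hcdf, invStein_decomp p h hpInt hhint,
      split_hp p h hhint x]
    set F := ∫ u in Iio x, p u with hF
    set A := ∫ u in Iio x, h u * p u with hA
    set B := ∫ u in Ici x, h u * p u with hB
    have hF0 : 0 ≤ F := F_nonneg p hp0 x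
    have hF1 : F ≤ 1 := F_le_one p hp0 hpInt hp1 x
    have hAle : |A| ≤ C * F := by
      calc |A| ≤ ∫ u in Iio x, |h u * p u| := by
            simpa [Real.norm_eq_abs, abs_mul, hA, hB] using
              norm_integral_le_integral_norm (μ := volume.restrict (Iio x))
                (fun u => h u * p u)
        _ ≤ ∫ u in Iio x, C * p u := by
            apply setIntegral_mono_on hhint.abs.integrableOn
              ((hpInt.integrableOn).const_mul _) measurableSet_Iio
            intro u _
            rw [abs_mul, abs_of_nonneg (hp0 u)]
            exact mul_le_mul_of_nonneg_right (hC u) (hp0 u)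
        _ = C * F := integral_const_mul _ _
    have hBle : |B| ≤ C * (1 - F) := by
      calc |B| ≤ ∫ u in Ici x, |h u * p u| := by
            simpa [Real.norm_eq_abs, abs_mul, hA, hB] using
              norm_integral_le_integral_norm (μ := volume.restrict (Ici x))
                (fun u => h u * p u)
        _ ≤ ∫ u in Ici x, C * p u := by
            apply setIntegral_mono_on hhint.abs.integrableOn
              ((hpInt.integrableOn).const_mul _) measurableSet_Ici
            intro u _
            rw [abs_mul, abs_of_nonneg (hp0 u)]
            exact mul_le_mul_of_nonneg_right (hC u) (hp0 u)
        _ = C * (1 - F) := by rw [integral_const_mul _ _, split_p p hpInt hp1 x]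
    have key : |A - (A + B) * F| ≤ 2 * C * (F * (1 - F)) := by
      have h0 : A - (A + B) * F = A * (1 - F) - B * F := by ring
      have h1 : |A * (1 - F) - B * F| ≤ |A| * (1 - F) + |B| * F := by
        calc |A * (1 - F) - B * F| ≤ |A * (1 - F)| + |B * F| := by
              rw [sub_eq_add_neg]
              exact (abs_add_le _ _).trans (by rw [abs_neg])
          _ = |A| * (1 - F) + |B| * F := by
              rw [abs_mul, abs_mul, abs_of_nonneg (by linarith : (0:ℝ) ≤ 1 - F),
                abs_of_nonneg hF0]
      rw [h0]
      nlinarith [mul_le_mul_of_nonneg_right hAle (by linarith : (0:ℝ) ≤ 1 - F),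
        mul_le_mul_of_nonneg_right hBle hF0, abs_nonneg A, abs_nonneg B]
    exact div_le_div_of_nonneg_right key hpx.le
end
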